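/- arXiv:2605.07373 — 9 statements merged into one kernel-verified Lean document; each statement's English description precedes it below -/
import Mathlib

section
/- For every pomset labelled transition system with divergence, all subsets P ⊆ P' of the label set Pom, every natural number n, and all processes p, q: if p ⊑^{P'}_n q then p ⊑^P_n q. -/
/-- A labelled transition system with divergence over a type `Lab` of labels. -/
structure LTS (Lab : Type) where
  Proc : Type
  Trans : Proc → Lab → Proc → Prop
  Div : Proc → Prop

namespace LTS

variable {Lab : Type}

/-- The set of initial labels of a process. -/
def initials (L : LTS Lab) (p : L.Proc) : Set Lab :=
  {U | ∃ q, L.Trans p U q}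

/-- The stratified relations `⊑^P_n` relative to a set `P` of labels. -/
def strat (L : LTS Lab) (P : Set Lab) : ℕ → L.Proc → L.Proc → Prop
  | 0, _, _ => True
  | n + 1, p, q =>
      (∀ U ∈ P, ∀ p', L.Trans p U p' → ∃ q', L.Trans q U q' ∧ L.strat P n p' q') ∧
      (L.initials p ⊆ P → ¬ L.Div p →
        L.initials q ⊆ P ∧ ¬ L.Div q ∧
        ∀ U ∈ P, ∀ q', L.Trans q U q' → ∃ p', L.Trans p U p' ∧ L.strat P n p' q')

/-- `p ⊑^P_ω q` : `p ⊑^P_n q` for all `n`. -/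
def stratOmega (L : LTS Lab) (P : Set Lab) (p q : L.Proc) : Prop :=
  ∀ n, L.strat P n p q

/-- `p ⊑^fin_ω q` : `p ⊑^P_ω q` for every finite set of labels `P`. -/
def finOmega (L : LTS Lab) (p q : L.Proc) : Prop :=
  ∀ P : Set Lab, P.Finite → L.stratOmega P p q

/-- The functional `F` on binary relations over processes. -/
def F (L : LTS Lab) (R : L.Proc → L.Proc → Prop) (p q : L.Proc) : Prop :=
  ∀ U : Lab,
    (∀ p', L.Trans p U p' → ∃ q', L.Trans q U q' ∧ R p' q') ∧
    (¬ L.Div p → ¬ L.Div q ∧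
      ∀ q', L.Trans q U q' → ∃ p', L.Trans p U p' ∧ R p' q')

/-- A relation `R` is a prebisimulation iff `R ⊆ F(R)`. -/
def IsPrebisimulation (L : LTS Lab) (R : L.Proc → L.Proc → Prop) : Prop :=
  ∀ a b, R a b → L.F R a b

/-- `p ≲ q` : `p` and `q` are related by some prebisimulation. -/
def Pre (L : LTS Lab) (p q : L.Proc) : Prop :=
  ∃ R : L.Proc → L.Proc → Prop, L.IsPrebisimulation R ∧ R p q

/-- The iterates `⊑_n` of `F` applied to the total relation. -/
def iter (L : LTS Lab) : ℕ → L.Proc → L.Proc → Prop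
  | 0, _, _ => True
  | n + 1, p, q => L.F (L.iter n) p q

/-- `p ⊑_ω q` : `p ⊑_n q` for all `n`. -/
def preOmega (L : LTS Lab) (p q : L.Proc) : Prop :=
  ∀ n, L.iter n p q

end LTS

theorem strat_antitone_plts (Pom : Type) (L : LTS Pom) (Pset Pset' : Set Pom) (hPP : Pset ⊆ Pset')
    (n : ℕ) (p q : L.Proc) (h : L.strat Pset' n p q) : L.strat Pset n p q := by
  induction n generalizing p q with
  | zero => trivial
  | succ n ih =>
    obtain ⟨h1, h2⟩ := h
    refine ⟨fun U hU p' hp' => ?_, fun hinit hdiv => ?_⟩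
    · obtain ⟨q', hq', hs⟩ := h1 U (hPP hU) p' hp'
      exact ⟨q', hq', ih _ _ hs⟩
    · obtain ⟨hq1, hq2, hq3⟩ := h2 (hinit.trans hPP) hdiv
      refine ⟨?_, hq2, fun U hU q' hq' => ?_⟩
      · intro U hU
        obtain ⟨q', hq'⟩ := hU
        obtain ⟨p', hp', _⟩ := hq3 U (hq1 ⟨q', hq'⟩) q' hq'
        exact hinit ⟨p', hp'⟩
      · obtain ⟨p', hp', hs⟩ := hq3 U (hPP hU) q' hq'
        exact ⟨p', hp', ih _ _ hs⟩
end

section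
/- For every step labelled transition system with divergence, all subsets P ⊆ P' of the set Stp of steps, every natural number n, and all processes p, q: if p ⊑^{P'}_n q then p ⊑^P_n q. -/
theorem strat_antitone_slts (Act : Type) (L : LTS (Multiset Act)) (Pset Pset' : Set (Multiset Act)) (hPP : Pset ⊆ Pset')
    (n : ℕ) (p q : L.Proc) (h : L.strat Pset' n p q) : L.strat Pset n p q := by
  induction n generalizing p q with
  | zero => trivial
  | succ n ih =>
    obtain ⟨h1, h2⟩ := h
    refine ⟨fun U hU p' hp' => ?_, fun hin hdiv => ?_⟩
    · obtain ⟨q', hq', hs⟩ := h1 U (hPP hU) p' hp'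
      exact ⟨q', hq', ih _ _ hs⟩
    · obtain ⟨hin', hdiv', hback⟩ := h2 (fun U hU => hPP (hin hU)) hdiv
      refine ⟨fun U hU => ?_, hdiv', fun U hU q' hq' => ?_⟩
      · obtain ⟨q', hq'⟩ := hU
        obtain ⟨p', hp', -⟩ := hback U (hin' ⟨q', hq'⟩) q' hq'
        exact hin ⟨p', hp'⟩
      · obtain ⟨p', hp', hs⟩ := hback U (hPP hU) q' hq'
        exact ⟨p', hp', ih _ _ hs⟩
end

section
/- For every step labelled transition system with divergence, every finite synchronization tree t over Stp, and every process p: t ≲ p if and only if t ⊑^fin_ω p (where t and p are compared in the disjoint union of the tree transition system and the given SLTS). -/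
/-- Finite synchronization trees over a label type `Lab`: a finite list of summands
`U : t'` together with a flag recording whether `Ω` is a summand. -/
inductive STree (Lab : Type) : Type where
  | node : List (Lab × STree Lab) → Bool → STree Lab

namespace STree

variable {Lab : Type}

/-- The summands `U : t'` of a synchronization tree. -/
def children : STree Lab → List (Lab × STree Lab)
  | node l _ => l

/-- Whether `Ω` is a summand of the synchronization tree. -/
def omega : STree Lab → Bool
  | node _ b => b

end STree

/-- The disjoint union of the transition system of finite synchronization trees
over `Lab` and a given LTS `L`. -/
def LTS.withTrees {Lab : Type} (L : LTS Lab) : LTS Lab where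
  Proc := STree Lab ⊕ L.Proc
  Trans := fun x U y =>
    match x, y with
    | Sum.inl t, Sum.inl t' => (U, t') ∈ t.children
    | Sum.inr p, Sum.inr p' => L.Trans p U p'
    | _, _ => False
  Div := fun x =>
    match x with
    | Sum.inl t => t.omega = true
    | Sum.inr p => L.Div p


/-!
A finite tree has finite depth and finitely many labels. Below a process of depth `d`, the
relation `⊑_{d+1}` already implies every `⊑_n`, so the transition matching demanded by one
`⊑_n` can be chosen independently of `n`; hence `⊑_ω`, restricted to trees on the left, is a
prebisimulation and coincides with `≲`, whatever the process on the right. Once `P` contains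
every label of the tree, the clause `initials ⊆ P` is harmless and `⊑^P_n` is just `⊑_n`, so
`⊑^fin_ω` coincides with `⊑_ω` as well.
-/

namespace LTS

variable {Lab : Type} (L : LTS Lab)

theorem F_mono {R S : L.Proc → L.Proc → Prop} (hRS : R ≤ S) : L.F R ≤ L.F S :=
  fun _ _ hF U =>
    ⟨fun p' hp' => ((hF U).1 p' hp').imp fun _ => And.imp_right (hRS _ _),
      fun hd => ((hF U).2 hd).imp_right fun h q' hq' =>
        (h q' hq').imp fun _ => And.imp_right (hRS _ _)⟩

theorem iter_antitone : Antitone L.iter := by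
  refine antitone_nat_of_succ_le fun n => ?_
  induction n with
  | zero => exact fun _ _ _ => trivial
  | succ n ih => exact L.F_mono ih

theorem IsPrebisimulation.le_iter {R : L.Proc → L.Proc → Prop} (hR : L.IsPrebisimulation R) :
    ∀ n, R ≤ L.iter n
  | 0 => fun _ _ _ => trivial
  | n + 1 => fun p q hpq => L.F_mono (hR.le_iter n) p q (hR p q hpq)

theorem Pre.preOmega {p q : L.Proc} (h : L.Pre p q) : L.preOmega p q :=
  let ⟨_, hR, hpq⟩ := h
  fun n => hR.le_iter L n p q hpq

/-- The divergence clause of `F` sits under `∀ U`, so it constrains nothing when there are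
no labels. -/
theorem iter_le_strat [Nonempty Lab] (P : Set Lab) : ∀ n, L.iter n ≤ L.strat P n
  | 0 => fun _ _ _ => trivial
  | n + 1 => fun p q h => by
    obtain ⟨u⟩ := ‹Nonempty Lab›
    refine ⟨fun U _ p' hp' => ?_, fun hinit hd => ⟨?_, ((h u).2 hd).1, fun U _ q' hq' => ?_⟩⟩
    · obtain ⟨q', hq', hn⟩ := (h U).1 p' hp'
      exact ⟨q', hq', iter_le_strat P n p' q' hn⟩
    · rintro U ⟨q', hq'⟩
      obtain ⟨p', hp', -⟩ := ((h U).2 hd).2 q' hq'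
      exact hinit ⟨p', hp'⟩
    · obtain ⟨p', hp', hn⟩ := ((h U).2 hd).2 q' hq'
      exact ⟨p', hp', iter_le_strat P n p' q' hn⟩

section LabelsWithin

variable {L} {S : Set L.Proc} {P : Set Lab}

theorem iter_of_strat (hS : ∀ p ∈ S, ∀ U p', L.Trans p U p' → U ∈ P ∧ p' ∈ S) :
    ∀ n {p q : L.Proc}, p ∈ S → L.strat P n p q → L.iter n p q
  | 0, _, _, _, _ => trivial
  | n + 1, p, q, hp, ⟨hfwd, hback⟩ => fun U => by
    refine ⟨fun p' hp' => ?_, fun hd => ?_⟩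
    · obtain ⟨hU, hp'S⟩ := hS p hp U p' hp'
      obtain ⟨q', hq', hn⟩ := hfwd U hU p' hp'
      exact ⟨q', hq', iter_of_strat hS n hp'S hn⟩
    · obtain ⟨hinit, hdq, hback⟩ := hback (fun V ⟨p', hp'⟩ => (hS p hp V p' hp').1) hd
      refine ⟨hdq, fun q' hq' => ?_⟩
      obtain ⟨p', hp', hn⟩ := hback U (hinit ⟨q', hq'⟩) q' hq'
      exact ⟨p', hp', iter_of_strat hS n (hS p hp U p' hp').2 hn⟩

theorem finOmega_iff_preOmega [Nonempty Lab] (hP : P.Finite)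
    (hS : ∀ p ∈ S, ∀ U p', L.Trans p U p' → U ∈ P ∧ p' ∈ S) {p q : L.Proc} (hp : p ∈ S) :
    L.finOmega p q ↔ L.preOmega p q :=
  ⟨fun h n => iter_of_strat hS n hp (h P hP n), fun h P' _ n => L.iter_le_strat P' n p q (h n)⟩

end LabelsWithin

section Depth

variable {L} {S : Set L.Proc} {d : L.Proc → ℕ}

theorem iter_of_iter_depth (hd : ∀ p ∈ S, ∀ U p', L.Trans p U p' → p' ∈ S ∧ d p' < d p) :
    ∀ n {p q : L.Proc}, p ∈ S → L.iter (d p + 1) p q → L.iter n p q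
  | 0, _, _, _, _ => trivial
  | n + 1, p, q, hp, h => fun U => by
    have descend : ∀ {p' q'}, L.Trans p U p' → L.iter (d p) p' q' → L.iter n p' q' :=
      fun hp' h' => iter_of_iter_depth hd n (hd p hp U _ hp').1
        (L.iter_antitone (hd p hp U _ hp').2 _ _ h')
    refine ⟨fun p' hp' => ?_, fun hdiv => ((h U).2 hdiv).imp_right fun hback q' hq' => ?_⟩
    · obtain ⟨q', hq', h'⟩ := (h U).1 p' hp'
      exact ⟨q', hq', descend hp' h'⟩
    · obtain ⟨p', hp', h'⟩ := hback q' hq'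
      exact ⟨p', hp', descend hp' h'⟩

theorem isPrebisimulation_preOmega
    (hd : ∀ p ∈ S, ∀ U p', L.Trans p U p' → p' ∈ S ∧ d p' < d p) :
    L.IsPrebisimulation fun p q => p ∈ S ∧ L.preOmega p q := by
  rintro p q ⟨hp, h⟩ U
  have stabilize : ∀ {p' q'}, L.Trans p U p' → L.iter (d p' + 1) p' q' →
      p' ∈ S ∧ L.preOmega p' q' :=
    fun hp' h' => ⟨(hd p hp U _ hp').1, fun n => iter_of_iter_depth hd n (hd p hp U _ hp').1 h'⟩
  refine ⟨fun p' hp' => ?_, fun hdiv => ⟨((h 1 U).2 hdiv).1, fun q' hq' => ?_⟩⟩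
  · obtain ⟨q', hq', h'⟩ := (h (d p' + 2) U).1 p' hp'
    exact ⟨q', hq', stabilize hp' h'⟩
  · obtain ⟨p', hp', h'⟩ := ((h (d p + 1) U).2 hdiv).2 q' hq'
    exact ⟨p', hp', stabilize hp' (L.iter_antitone (hd p hp U _ hp').2 _ _ h')⟩

theorem pre_iff_preOmega (hd : ∀ p ∈ S, ∀ U p', L.Trans p U p' → p' ∈ S ∧ d p' < d p)
    {p q : L.Proc} (hp : p ∈ S) : L.Pre p q ↔ L.preOmega p q :=
  ⟨Pre.preOmega L, fun h => ⟨_, isPrebisimulation_preOmega hd, hp, h⟩⟩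

end Depth

end LTS

namespace STree

variable {Lab : Type}

theorem sizeOf_snd_lt_of_mem {l : List (Lab × STree Lab)} {x : Lab × STree Lab} (h : x ∈ l) :
    sizeOf x.2 < sizeOf l := by
  have := List.sizeOf_lt_of_mem h
  rw [← Prod.mk.eta (p := x), Prod.mk.sizeOf_spec] at this
  omega

theorem sizeOf_lt_of_mem_children {t t' : STree Lab} {U : Lab} (h : (U, t') ∈ t.children) :
    sizeOf t' < sizeOf t := by
  cases t with
  | node l b =>
    have : sizeOf t' < sizeOf l := sizeOf_snd_lt_of_mem (x := (U, t')) h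
    simp only [node.sizeOf_spec]
    omega

def labels : STree Lab → List Lab
  | node l _ => l.flatMap fun x => x.1 :: labels x.2
decreasing_by
  have := sizeOf_snd_lt_of_mem ‹x ∈ l›
  simp only [node.sizeOf_spec]
  omega

theorem labels_subset_of_mem_children {t t' : STree Lab} {U : Lab} (h : (U, t') ∈ t.children) :
    U ∈ t.labels ∧ t'.labels ⊆ t.labels := by
  cases t with
  | node l b =>
    simp only [children] at h
    refine ⟨?_, fun a ha => ?_⟩ <;> simp only [labels, List.mem_flatMap]
    exacts [⟨_, h, List.mem_cons_self⟩, ⟨_, h, List.mem_cons_of_mem _ ha⟩]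

end STree

namespace LTS

variable {Lab : Type} {L : LTS Lab}

theorem withTrees_trans_inl {t : STree Lab} {U : Lab} {y : L.withTrees.Proc} :
    L.withTrees.Trans (Sum.inl t) U y ↔ ∃ t', y = Sum.inl t' ∧ (U, t') ∈ t.children := by
  cases y <;> simp [withTrees]

theorem withTrees_trans_inl_sizeOf :
    ∀ x ∈ Set.range (Sum.inl : STree Lab → L.withTrees.Proc), ∀ U y, L.withTrees.Trans x U y →
      y ∈ Set.range Sum.inl ∧ Sum.elim sizeOf 0 y < Sum.elim sizeOf 0 x := by
  rintro _ ⟨t, rfl⟩ U y hy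
  obtain ⟨t', rfl, h⟩ := withTrees_trans_inl.1 hy
  exact ⟨⟨t', rfl⟩, STree.sizeOf_lt_of_mem_children h⟩

theorem withTrees_trans_inl_labels (t : STree Lab) :
    ∀ x ∈ (Sum.inl '' {s | s.labels ⊆ t.labels} : Set L.withTrees.Proc), ∀ U y,
      L.withTrees.Trans x U y →
        U ∈ {a | a ∈ t.labels} ∧ y ∈ Sum.inl '' {s | s.labels ⊆ t.labels} := by
  rintro _ ⟨s, hs, rfl⟩ U y hy
  obtain ⟨s', rfl, h⟩ := withTrees_trans_inl.1 hy
  obtain ⟨hU, hs'⟩ := STree.labels_subset_of_mem_children h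
  exact ⟨hs hU, s', List.Subset.trans hs' hs, rfl⟩

end LTS

theorem tree_pre_iff_finOmega_slts (Act : Type) (L : LTS (Multiset Act)) (t : STree (Multiset Act)) (p : L.Proc) :
    L.withTrees.Pre (Sum.inl t) (Sum.inr p) ↔
      L.withTrees.finOmega (Sum.inl t) (Sum.inr p) :=
  (LTS.pre_iff_preOmega LTS.withTrees_trans_inl_sizeOf (Set.mem_range_self t)).trans
    (LTS.finOmega_iff_preOmega t.labels.finite_toSet (LTS.withTrees_trans_inl_labels t)
      ⟨t, List.Subset.refl _, rfl⟩).symm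
end

section
/- For every pomset labelled transition system with divergence, the preorder ⊑^fin_ω is finitary: for all processes p, q, p ⊑^fin_ω q holds if and only if every finite synchronization tree t over Pom with t ⊑^fin_ω p also satisfies t ⊑^fin_ω q (where t and the processes are compared in the disjoint union of the tree transition system and the given PLTS). -/
section Aux

namespace LTS

variable {Pom : Type}

theorem strat_refl (L : LTS Pom) (P : Set Pom) : ∀ n p, L.strat P n p p := by
  intro n
  induction n with
  | zero => intro p; trivial
  | succ n ih =>
    intro p
    exact ⟨fun U hU p' hp' => ⟨p', hp', ih p'⟩,
      fun h1 h2 => ⟨h1, h2, fun U hU q' hq' => ⟨q', hq', ih q'⟩⟩⟩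

theorem strat_trans (L : LTS Pom) (P : Set Pom) :
    ∀ n a b c, L.strat P n a b → L.strat P n b c → L.strat P n a c := by
  intro n
  induction n with
  | zero => intros; trivial
  | succ n ih =>
    rintro a b c ⟨f1, b1⟩ ⟨f2, b2⟩
    constructor
    · intro U hU a' ha'
      obtain ⟨b', hb', h1⟩ := f1 U hU a' ha'
      obtain ⟨c', hc', h2⟩ := f2 U hU b' hb'
      exact ⟨c', hc', ih _ _ _ h1 h2⟩
    · intro hia hda
      obtain ⟨hib, hdb, g1⟩ := b1 hia hda
      obtain ⟨hic, hdc, g2⟩ := b2 hib hdb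
      refine ⟨hic, hdc, fun U hU c' hc' => ?_⟩
      obtain ⟨b', hb', h2⟩ := g2 U hU c' hc'
      obtain ⟨a', ha', h1⟩ := g1 U hU b' hb'
      exact ⟨a', ha', ih _ _ _ h1 h2⟩

theorem wt_trans_inr_iff (L : LTS Pom) {a : L.Proc} {U : Pom} {x} :
    L.withTrees.Trans (Sum.inr a) U x ↔ ∃ b, x = Sum.inr b ∧ L.Trans a U b := by
  cases x with
  | inl t => simp [LTS.withTrees]
  | inr b => simp [LTS.withTrees]

theorem wt_trans_inl_iff (L : LTS Pom) {t : STree Pom} {U : Pom} {x} :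
    L.withTrees.Trans (Sum.inl t) U x ↔ ∃ t', x = Sum.inl t' ∧ (U, t') ∈ t.children := by
  cases x with
  | inl t' => simp [LTS.withTrees]
  | inr b => simp [LTS.withTrees]

theorem wt_initials_inr (L : LTS Pom) (a : L.Proc) :
    L.withTrees.initials (Sum.inr a) = L.initials a := by
  ext U
  constructor
  · rintro ⟨x, hx⟩
    obtain ⟨b, rfl, hb⟩ := (L.wt_trans_inr_iff).mp hx
    exact ⟨b, hb⟩
  · rintro ⟨b, hb⟩
    exact ⟨Sum.inr b, (L.wt_trans_inr_iff).mpr ⟨b, rfl, hb⟩⟩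

theorem strat_inr (L : LTS Pom) (P : Set Pom) :
    ∀ n (a b : L.Proc), L.strat P n a b →
      L.withTrees.strat P n (Sum.inr a) (Sum.inr b) := by
  intro n
  induction n with
  | zero => intros; trivial
  | succ n ih =>
    rintro a b ⟨f, bk⟩
    constructor
    · intro U hU x hx
      obtain ⟨a', rfl, ha'⟩ := (L.wt_trans_inr_iff).mp hx
      obtain ⟨b', hb', h⟩ := f U hU a' ha'
      exact ⟨Sum.inr b', hb', ih _ _ h⟩
    · intro hia hda
      rw [wt_initials_inr] at hia
      obtain ⟨hib, hdb, g⟩ := bk hia hda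
      refine ⟨by rw [wt_initials_inr]; exact hib, hdb, ?_⟩
      intro U hU x hx
      obtain ⟨b', rfl, hb'⟩ := (L.wt_trans_inr_iff).mp hx
      obtain ⟨a', ha', h⟩ := g U hU b' hb'
      exact ⟨Sum.inr a', ha', ih _ _ h⟩

/-! ### Finite behaviour data of depth `n` over a finite label set `P` -/

def D (P : Set Pom) : ℕ → Type
  | 0 => PUnit
  | n + 1 => (↥P → Set (D P n)) × Prop × Prop

theorem finD {P : Set Pom} (hP : P.Finite) (n : ℕ) : Finite (D P n) := by
  induction n with
  | zero => exact inferInstanceAs (Finite PUnit.{1})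
  | succ n ih =>
    haveI := hP.to_subtype
    haveI := ih
    exact inferInstanceAs (Finite ((↥P → Set (D P n)) × Prop × Prop))

def dd (L : LTS Pom) (P : Set Pom) : (n : ℕ) → L.Proc → D P n
  | 0, _ => PUnit.unit
  | n + 1, p =>
    ⟨fun U => {x | ∃ p', L.Trans p (U : Pom) p' ∧ dd L P n p' = x},
      L.initials p ⊆ P, L.Div p⟩

theorem dd_congr (L : LTS Pom) (P : Set Pom) :
    ∀ n (p q p₂ q₂ : L.Proc), dd L P n p = dd L P n p₂ → dd L P n q = dd L P n q₂ →
      L.strat P n p q → L.strat P n p₂ q₂ := by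
  intro n
  induction n with
  | zero => intros; trivial
  | succ n ih =>
    intro p q p₂ q₂ hp hq h
    have hp' : @Eq ((↥P → Set (D P n)) × Prop × Prop) (dd L P (n + 1) p) (dd L P (n + 1) p₂) :=
      hp
    have hq' : @Eq ((↥P → Set (D P n)) × Prop × Prop) (dd L P (n + 1) q) (dd L P (n + 1) q₂) :=
      hq
    simp only [dd, Prod.mk.injEq] at hp' hq'
    obtain ⟨hp1, hp2, hp3⟩ := hp'
    obtain ⟨hq1, hq2, hq3⟩ := hq'
    have hp1' : ∀ (U : Pom) (hU : U ∈ P) (x : D P n),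
        (∃ p', L.Trans p U p' ∧ dd L P n p' = x) ↔
          (∃ p', L.Trans p₂ U p' ∧ dd L P n p' = x) := by
      intro U hU x
      exact Set.ext_iff.mp (congrFun hp1 ⟨U, hU⟩) x
    have hq1' : ∀ (U : Pom) (hU : U ∈ P) (x : D P n),
        (∃ q', L.Trans q U q' ∧ dd L P n q' = x) ↔
          (∃ q', L.Trans q₂ U q' ∧ dd L P n q' = x) := by
      intro U hU x
      exact Set.ext_iff.mp (congrFun hq1 ⟨U, hU⟩) x
    obtain ⟨f, bk⟩ := h
    constructor
    · intro U hU p₂' hp₂'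
      obtain ⟨p', hp', hdp'⟩ := (hp1' U hU (dd L P n p₂')).mpr ⟨p₂', hp₂', rfl⟩
      obtain ⟨q', hq', hst⟩ := f U hU p' hp'
      obtain ⟨q₂', hq₂', hdq'⟩ := (hq1' U hU (dd L P n q')).mp ⟨q', hq', rfl⟩
      exact ⟨q₂', hq₂', ih p' q' p₂' q₂' hdp' hdq'.symm hst⟩
    · intro hi2 hd2
      have hi : L.initials p ⊆ P := hp2 ▸ hi2
      have hd : ¬ L.Div p := by rw [hp3]; exact hd2
      obtain ⟨hiq, hdq, g⟩ := bk hi hd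
      refine ⟨hq2 ▸ hiq, by rw [← hq3]; exact hdq, ?_⟩
      intro U hU q₂' hq₂'
      obtain ⟨q', hq', hdq'⟩ := (hq1' U hU (dd L P n q₂')).mpr ⟨q₂', hq₂', rfl⟩
      obtain ⟨p', hp', hst⟩ := g U hU q' hq'
      obtain ⟨p₂', hp₂', hdp'⟩ := (hp1' U hU (dd L P n p')).mp ⟨p', hp', rfl⟩
      exact ⟨p₂', hp₂', ih p' q' p₂' q₂' hdp'.symm hdq' hst⟩

/-! ### Characteristic trees -/

open Classical in
noncomputable def reps (L : LTS Pom) {P : Set Pom} (hP : P.Finite) (n : ℕ) (p : L.Proc)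
    (U : Pom) : List L.Proc :=
  haveI : Finite (D P n) := finD hP n
  ((dd L P n '' {p' | L.Trans p U p'}).toFinite.toFinset.toList).map
    (fun x => if h : ∃ p', L.Trans p U p' ∧ dd L P n p' = x then Classical.choose h else p)

theorem reps_trans (L : LTS Pom) {P : Set Pom} (hP : P.Finite) (n : ℕ) (p : L.Proc)
    (U : Pom) : ∀ r ∈ reps L hP n p U, L.Trans p U r := by
  intro r hr
  haveI : Finite (D P n) := finD hP n
  rw [reps, List.mem_map] at hr
  obtain ⟨x, hx, hrx⟩ := hr
  rw [Finset.mem_toList, Set.Finite.mem_toFinset] at hx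
  obtain ⟨p', hp', hdx⟩ := hx
  have hex : ∃ p'', L.Trans p U p'' ∧ dd L P n p'' = x := ⟨p', hp', hdx⟩
  rw [dif_pos hex] at hrx
  rw [← hrx]
  exact (Classical.choose_spec hex).1

theorem reps_complete (L : LTS Pom) {P : Set Pom} (hP : P.Finite) (n : ℕ) (p : L.Proc)
    (U : Pom) : ∀ p', L.Trans p U p' →
      ∃ r, L.Trans p U r ∧ dd L P n r = dd L P n p' ∧ r ∈ reps L hP n p U := by
  intro p' hp'
  haveI : Finite (D P n) := finD hP n
  have hx : dd L P n p' ∈ dd L P n '' {p'' | L.Trans p U p''} := ⟨p', hp', rfl⟩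
  have hex : ∃ p'', L.Trans p U p'' ∧ dd L P n p'' = dd L P n p' := ⟨p', hp', rfl⟩
  refine ⟨Classical.choose hex, (Classical.choose_spec hex).1, (Classical.choose_spec hex).2, ?_⟩
  rw [reps, List.mem_map]
  refine ⟨dd L P n p', ?_, dif_pos hex⟩
  rw [Finset.mem_toList, Set.Finite.mem_toFinset]
  exact hx

open Classical in
noncomputable def chi (L : LTS Pom) {P : Set Pom} (hP : P.Finite) : ℕ → L.Proc → STree Pom
  | 0, _ => .node [] true
  | n + 1, p =>
    .node
      (hP.toFinset.toList.flatMap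
        (fun U => (reps L hP n p U).map (fun r => (U, chi L hP n r))))
      (if L.initials p ⊆ P ∧ ¬ L.Div p then false else true)

theorem chi_children (L : LTS Pom) {P : Set Pom} (hP : P.Finite) (n : ℕ) (p : L.Proc)
    (U : Pom) (t : STree Pom) :
    (U, t) ∈ (chi L hP (n + 1) p).children ↔
      U ∈ P ∧ ∃ r ∈ reps L hP n p U, t = chi L hP n r := by
  rw [chi]
  simp only [STree.children, List.mem_flatMap, List.mem_map, Finset.mem_toList,
    Set.Finite.mem_toFinset, Prod.mk.injEq]
  constructor
  · rintro ⟨V, hV, r, hr, rfl, rfl⟩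
    exact ⟨hV, r, hr, rfl⟩
  · rintro ⟨hU, r, hr, rfl⟩
    exact ⟨U, hU, r, hr, rfl, rfl⟩

theorem chi_omega (L : LTS Pom) {P : Set Pom} (hP : P.Finite) (n : ℕ) (p : L.Proc) :
    (chi L hP (n + 1) p).omega = true ↔ ¬ (L.initials p ⊆ P ∧ ¬ L.Div p) := by
  rw [chi]
  simp only [STree.omega]
  split_ifs with h <;> simp [h]

theorem chi_initials (L : LTS Pom) {P : Set Pom} (hP : P.Finite) (n : ℕ) (p : L.Proc) :
    L.withTrees.initials (Sum.inl (chi L hP (n + 1) p)) =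
      {U | U ∈ P ∧ ∃ p', L.Trans p U p'} := by
  ext U
  constructor
  · rintro ⟨x, hx⟩
    obtain ⟨t', rfl, hmem⟩ := (L.wt_trans_inl_iff).mp hx
    obtain ⟨hU, r, hr, rfl⟩ := (chi_children L hP n p U t').mp hmem
    exact ⟨hU, r, reps_trans L hP n p U r hr⟩
  · rintro ⟨hU, p', hp'⟩
    obtain ⟨r, hrt, hrd, hrm⟩ := reps_complete L hP n p U p' hp'
    refine ⟨Sum.inl (chi L hP n r), ?_⟩
    exact (chi_children L hP n p U (chi L hP n r)).mpr ⟨hU, r, hrm, rfl⟩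

theorem chi_le (L : LTS Pom) {P : Set Pom} (hP : P.Finite) :
    ∀ n, ∀ p r : L.Proc, L.strat P n p r →
      ∀ (P' : Set Pom) (m : ℕ),
        L.withTrees.strat P' m (Sum.inl (chi L hP n p)) (Sum.inr r) := by
  intro n
  induction n with
  | zero =>
    intro p r _ P' m
    cases m with
    | zero => trivial
    | succ m =>
      constructor
      · intro U hU x hx
        obtain ⟨t', rfl, hmem⟩ := (L.wt_trans_inl_iff).mp hx
        rw [chi] at hmem
        simp [STree.children] at hmem
      · intro _ hdiv
        exfalso
        apply hdiv
        show (chi L hP 0 p).omega = true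
        rw [chi]
        rfl
  | succ n ih =>
    rintro p r ⟨f, bk⟩ P' m
    cases m with
    | zero => trivial
    | succ m =>
      constructor
      · intro U hU x hx
        obtain ⟨t', rfl, hmem⟩ := (L.wt_trans_inl_iff).mp hx
        obtain ⟨hUP, ρ, hρ, rfl⟩ := (chi_children L hP n p U t').mp hmem
        have htr : L.Trans p U ρ := reps_trans L hP n p U ρ hρ
        obtain ⟨r', hr', hst⟩ := f U hUP ρ htr
        exact ⟨Sum.inr r', hr', ih ρ r' hst P' m⟩
      · intro hin hdiv
        have hc : L.initials p ⊆ P ∧ ¬ L.Div p := by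
          by_contra hc
          exact hdiv ((chi_omega L hP n p).mpr hc)
        obtain ⟨hip, hdp⟩ := hc
        obtain ⟨hir, hdr, g⟩ := bk hip hdp
        refine ⟨?_, hdr, ?_⟩
        · intro U hU
          rw [wt_initials_inr] at hU
          obtain ⟨r', hr'⟩ := hU
          have hUP : U ∈ P := hir ⟨r', hr'⟩
          obtain ⟨p', hp', _⟩ := g U hUP r' hr'
          apply hin
          rw [chi_initials]
          exact ⟨hUP, p', hp'⟩
        · intro U hUP' x' hx'
          obtain ⟨r', rfl, hr'⟩ := (L.wt_trans_inr_iff).mp hx'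
          have hUP : U ∈ P := hir ⟨r', hr'⟩
          obtain ⟨p', hp', hst⟩ := g U hUP r' hr'
          obtain ⟨ρ, hρt, hρd, hρm⟩ := reps_complete L hP n p U p' hp'
          have hst' : L.strat P n ρ r' := dd_congr L P n p' r' ρ r' hρd.symm rfl hst
          refine ⟨Sum.inl (chi L hP n ρ), ?_, ih ρ r' hst' P' m⟩
          exact (chi_children L hP n p U (chi L hP n ρ)).mpr ⟨hUP, ρ, hρm, rfl⟩

theorem chi_reflect (L : LTS Pom) {P : Set Pom} (hP : P.Finite) :
    ∀ n (p r : L.Proc),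
      L.withTrees.strat P n (Sum.inl (chi L hP n p)) (Sum.inr r) → L.strat P n p r := by
  intro n
  induction n with
  | zero => intros; trivial
  | succ n ih =>
    rintro p r ⟨h1, h2⟩
    constructor
    · intro U hU p' hp'
      obtain ⟨ρ, hρt, hρd, hρm⟩ := reps_complete L hP n p U p' hp'
      have hmem : L.withTrees.Trans (Sum.inl (chi L hP (n + 1) p)) U (Sum.inl (chi L hP n ρ)) :=
        (chi_children L hP n p U (chi L hP n ρ)).mpr ⟨hU, ρ, hρm, rfl⟩
      obtain ⟨y, hy, hst⟩ := h1 U hU (Sum.inl (chi L hP n ρ)) hmem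
      obtain ⟨r', rfl, hr'⟩ := (L.wt_trans_inr_iff).mp hy
      have : L.strat P n ρ r' := ih ρ r' hst
      exact ⟨r', hr', dd_congr L P n ρ r' p' r' hρd rfl this⟩
    · intro hip hdp
      have hin : L.withTrees.initials (Sum.inl (chi L hP (n + 1) p)) ⊆ P := by
        rw [chi_initials]
        intro U hU
        exact hU.1
      have hdiv : ¬ L.withTrees.Div (Sum.inl (chi L hP (n + 1) p)) := by
        intro hd
        exact (chi_omega L hP n p).mp hd ⟨hip, hdp⟩
      obtain ⟨hir, hdr, g⟩ := h2 hin hdiv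
      refine ⟨?_, hdr, ?_⟩
      · intro U hU
        apply hir
        rw [wt_initials_inr]
        exact hU
      · intro U hU r' hr'
        obtain ⟨x, hx, hst⟩ := g U hU (Sum.inr r')
          ((L.wt_trans_inr_iff).mpr ⟨r', rfl, hr'⟩)
        obtain ⟨t, rfl, hmem⟩ := (L.wt_trans_inl_iff).mp hx
        obtain ⟨hUP, ρ, hρm, rfl⟩ := (chi_children L hP n p U t).mp hmem
        exact ⟨ρ, reps_trans L hP n p U ρ hρm, ih ρ r' hst⟩

end LTS

end Aux

theorem finOmega_finitary_plts (Pom : Type) (L : LTS Pom) (p q : L.Proc) :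
    L.finOmega p q ↔
      ∀ t : STree Pom,
        L.withTrees.finOmega (Sum.inl t) (Sum.inr p) →
          L.withTrees.finOmega (Sum.inl t) (Sum.inr q) := by
  constructor
  · intro h t ht P hP n
    exact L.withTrees.strat_trans P n _ _ _ (ht P hP n) (L.strat_inr P n p q (h P hP n))
  · intro h P hP n
    have hchi : L.withTrees.finOmega (Sum.inl (LTS.chi L hP n p)) (Sum.inr p) := by
      intro P' hP' m
      exact LTS.chi_le L hP n p p (L.strat_refl P n p) P' m
    exact LTS.chi_reflect L hP n p q (h _ hchi P hP n)
end

section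
/- For every step labelled transition system with divergence, the preorder ⊑^fin_ω is finitary: for all processes p, q, p ⊑^fin_ω q holds if and only if every finite synchronization tree t over Stp with t ⊑^fin_ω p also satisfies t ⊑^fin_ω q (where t and the processes are compared in the disjoint union of the tree transition system and the given SLTS). -/
section Aux

open Classical

variable {Lab : Type}

/-- Finite "type spaces" for the stratified relations relative to a finite `P`. -/
def TypSp (P : Set Lab) : ℕ → Type
  | 0 => PUnit
  | n + 1 => Set (↥P × TypSp P n) × Prop

lemma typSp_finite (P : Set Lab) (hP : P.Finite) : ∀ n, Finite (TypSp P n)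
  | 0 => by unfold TypSp; infer_instance
  | n + 1 => by
      haveI := hP.to_subtype
      haveI := typSp_finite P hP n
      unfold TypSp; infer_instance

/-- The `(P,n)`-type of a process. -/
def LTS.typ (L : LTS Lab) (P : Set Lab) : (n : ℕ) → L.Proc → TypSp P n
  | 0, _ => ⟨⟩
  | n + 1, p =>
      ⟨{x | ∃ p', L.Trans p x.1.val p' ∧ L.typ P n p' = x.2},
       L.initials p ⊆ P ∧ ¬ L.Div p⟩

/-- The preorder on type spaces mirroring `strat`. -/
def typRel (P : Set Lab) : (n : ℕ) → TypSp P n → TypSp P n → Prop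
  | 0, _, _ => True
  | n + 1, a, b =>
      (∀ x ∈ a.1, ∃ τ, (x.1, τ) ∈ b.1 ∧ typRel P n x.2 τ) ∧
      (a.2 → b.2 ∧ ∀ x ∈ b.1, ∃ τ, (x.1, τ) ∈ a.1 ∧ typRel P n τ x.2)

lemma strat_iff_typRel (L : LTS Lab) (P : Set Lab) :
    ∀ n (p q : L.Proc), L.strat P n p q ↔ typRel P n (L.typ P n p) (L.typ P n q)
  | 0, p, q => by simp [LTS.strat, typRel]
  | n + 1, p, q => by
      constructor
      · rintro ⟨h1, h2⟩
        constructor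
        · rintro x ⟨p', hT, hτ⟩
          obtain ⟨q', hTq, hs⟩ := h1 x.1.val x.1.2 p' hT
          exact ⟨L.typ P n q', ⟨q', hTq, rfl⟩,
            hτ ▸ (strat_iff_typRel L P n p' q').mp hs⟩
        · rintro ⟨hip, hdp⟩
          obtain ⟨hiq, hdq, h3⟩ := h2 hip hdp
          refine ⟨⟨hiq, hdq⟩, ?_⟩
          rintro x ⟨q', hTq, hτ⟩
          obtain ⟨p', hTp, hs⟩ := h3 x.1.val x.1.2 q' hTq
          exact ⟨L.typ P n p', ⟨p', hTp, rfl⟩,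
            hτ ▸ (strat_iff_typRel L P n p' q').mp hs⟩
      · rintro ⟨h1, h2⟩
        constructor
        · intro U hU p' hT
          obtain ⟨τ, ⟨q', hTq, hτ⟩, hr⟩ := h1 (⟨U, hU⟩, L.typ P n p') ⟨p', hT, rfl⟩
          exact ⟨q', hTq, (strat_iff_typRel L P n p' q').mpr (hτ ▸ hr)⟩
        · intro hip hdp
          obtain ⟨⟨hiq, hdq⟩, hback⟩ := h2 ⟨hip, hdp⟩
          refine ⟨hiq, hdq, ?_⟩
          intro U hU q' hTq
          obtain ⟨τ, ⟨p', hTp, hτ⟩, hr⟩ := hback (⟨U, hU⟩, L.typ P n q') ⟨q', hTq, rfl⟩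
          exact ⟨p', hTp, (strat_iff_typRel L P n p' q').mpr (hτ ▸ hr)⟩

lemma strat_congr_left (L : LTS Lab) (P : Set Lab) (n : ℕ) {a b : L.Proc}
    (h : L.typ P n a = L.typ P n b) (x : L.Proc) :
    L.strat P n a x ↔ L.strat P n b x := by
  rw [strat_iff_typRel, strat_iff_typRel, h]

/-- The set of `(label, type)` pairs reachable from `p` by a `P`-step. -/
def LTS.sucSet (L : LTS Lab) (P : Set Lab) (n : ℕ) (p : L.Proc) :
    Set (↥P × TypSp P n) :=
  {x | ∃ p', L.Trans p x.1.val p' ∧ L.typ P n p' = x.2}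

/-- A choice of representative successor for each reachable `(label, type)` pair. -/
noncomputable def LTS.pick (L : LTS Lab) (P : Set Lab) (n : ℕ) (p : L.Proc)
    (x : ↥P × TypSp P n) : L.Proc :=
  if h : ∃ p', L.Trans p x.1.val p' ∧ L.typ P n p' = x.2 then h.choose else p

lemma LTS.pick_spec (L : LTS Lab) (P : Set Lab) (n : ℕ) (p : L.Proc)
    {x : ↥P × TypSp P n} (hx : x ∈ L.sucSet P n p) :
    L.Trans p x.1.val (L.pick P n p x) ∧ L.typ P n (L.pick P n p x) = x.2 := by
  have hx' : ∃ p', L.Trans p x.1.val p' ∧ L.typ P n p' = x.2 := hx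
  unfold LTS.pick
  rw [dif_pos hx']
  exact hx'.choose_spec

/-- The `(P,n)`-characteristic tree of a process. -/
noncomputable def LTS.charTree (L : LTS Lab) (P : Set Lab) (hP : P.Finite) :
    ℕ → L.Proc → STree Lab
  | 0, _ => .node [] true
  | n + 1, p =>
      haveI := hP.to_subtype
      haveI := typSp_finite P hP n
      .node (((L.sucSet P n p).toFinite.toFinset.toList).map
          (fun x => (x.1.val, L.charTree P hP n (L.pick P n p x))))
        (if L.initials p ⊆ P ∧ ¬ L.Div p then false else true)

lemma LTS.charTree_zero (L : LTS Lab) (P : Set Lab) (hP : P.Finite) (p : L.Proc) :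
    L.charTree P hP 0 p = .node [] true := rfl

lemma LTS.mem_charTree_children (L : LTS Lab) (P : Set Lab) (hP : P.Finite)
    (n : ℕ) (p : L.Proc) (U : Lab) (s : STree Lab) :
    (U, s) ∈ (L.charTree P hP (n + 1) p).children ↔
      ∃ x ∈ L.sucSet P n p, x.1.val = U ∧ s = L.charTree P hP n (L.pick P n p x) := by
  haveI := hP.to_subtype
  haveI := typSp_finite P hP n
  show (U, s) ∈ List.map _ _ ↔ _
  simp only [List.mem_map, Finset.mem_toList, Set.Finite.mem_toFinset, Prod.mk.injEq]
  constructor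
  · rintro ⟨x, hx, h1, h2⟩; exact ⟨x, hx, h1, h2.symm⟩
  · rintro ⟨x, hx, h1, h2⟩; exact ⟨x, hx, h1, h2.symm⟩

lemma LTS.charTree_omega (L : LTS Lab) (P : Set Lab) (hP : P.Finite)
    (n : ℕ) (p : L.Proc) :
    (L.charTree P hP (n + 1) p).omega =
      (if L.initials p ⊆ P ∧ ¬ L.Div p then false else true) := rfl

end Aux
section Aux2

variable {Lab : Type}

lemma LTS.trans_inr_elim (L : LTS Lab) {p : L.Proc} {U : Lab} {y : STree Lab ⊕ L.Proc}
    (h : L.withTrees.Trans (Sum.inr p) U y) :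
    ∃ p', y = Sum.inr p' ∧ L.Trans p U p' := by
  cases y with
  | inl t => exact absurd h (by simp [LTS.withTrees])
  | inr p' => exact ⟨p', rfl, h⟩

lemma LTS.trans_inl_elim (L : LTS Lab) {t : STree Lab} {U : Lab} {y : STree Lab ⊕ L.Proc}
    (h : L.withTrees.Trans (Sum.inl t) U y) :
    ∃ s, y = Sum.inl s ∧ (U, s) ∈ t.children := by
  cases y with
  | inl s => exact ⟨s, rfl, h⟩
  | inr p' => exact absurd h (by simp [LTS.withTrees])

lemma LTS.trans_inl_intro (L : LTS Lab) {t s : STree Lab} {U : Lab}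
    (h : (U, s) ∈ t.children) :
    L.withTrees.Trans (Sum.inl t) U (Sum.inl s) := h

lemma LTS.trans_inr_intro (L : LTS Lab) {p p' : L.Proc} {U : Lab}
    (h : L.Trans p U p') :
    L.withTrees.Trans (Sum.inr p) U (Sum.inr p') := h

lemma LTS.div_inl (L : LTS Lab) (t : STree Lab) :
    L.withTrees.Div (Sum.inl t) ↔ t.omega = true := Iff.rfl

lemma LTS.div_inr (L : LTS Lab) (p : L.Proc) :
    L.withTrees.Div (Sum.inr p) ↔ L.Div p := Iff.rfl

lemma LTS.initials_inr (L : LTS Lab) (p : L.Proc) :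
    L.withTrees.initials (Sum.inr p) = L.initials p := by
  ext U
  constructor
  · rintro ⟨y, hy⟩
    obtain ⟨p', -, h⟩ := L.trans_inr_elim hy
    exact ⟨p', h⟩
  · rintro ⟨p', h⟩
    exact ⟨Sum.inr p', h⟩

/-- `strat` is reflexive. -/
lemma LTS.strat_refl_s9 (L : LTS Lab) (P : Set Lab) : ∀ n (p : L.Proc), L.strat P n p p
  | 0, _ => trivial
  | n + 1, p => by
      refine ⟨fun U hU p' h => ⟨p', h, L.strat_refl_s9 P n p'⟩, fun h1 h2 => ⟨h1, h2, ?_⟩⟩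
      exact fun U hU q' h => ⟨q', h, L.strat_refl_s9 P n q'⟩

/-- `strat` is transitive. -/
lemma LTS.strat_trans_s9 (L : LTS Lab) (P : Set Lab) :
    ∀ n (a b c : L.Proc), L.strat P n a b → L.strat P n b c → L.strat P n a c
  | 0, _, _, _, _, _ => trivial
  | n + 1, a, b, c, hab, hbc => by
      constructor
      · intro U hU a' hT
        obtain ⟨b', hTb, h1⟩ := hab.1 U hU a' hT
        obtain ⟨c', hTc, h2⟩ := hbc.1 U hU b' hTb
        exact ⟨c', hTc, L.strat_trans_s9 P n a' b' c' h1 h2⟩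
      · intro hia hda
        obtain ⟨hib, hdb, hback1⟩ := hab.2 hia hda
        obtain ⟨hic, hdc, hback2⟩ := hbc.2 hib hdb
        refine ⟨hic, hdc, ?_⟩
        intro U hU c' hTc
        obtain ⟨b', hTb, h2⟩ := hback2 U hU c' hTc
        obtain ⟨a', hTa, h1⟩ := hback1 U hU b' hTb
        exact ⟨a', hTa, L.strat_trans_s9 P n a' b' c' h1 h2⟩

/-- `strat` in `L` transfers to `strat` in `L.withTrees` on right injections. -/
lemma LTS.strat_inr_s9 (L : LTS Lab) (P : Set Lab) :
    ∀ n (p q : L.Proc), L.strat P n p q →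
      L.withTrees.strat P n (Sum.inr p) (Sum.inr q)
  | 0, _, _, _ => trivial
  | n + 1, p, q, h => by
      constructor
      · intro U hU y hTy
        obtain ⟨p', rfl, hT⟩ := L.trans_inr_elim hTy
        obtain ⟨q', hTq, hs⟩ := h.1 U hU p' hT
        exact ⟨Sum.inr q', L.trans_inr_intro hTq, L.strat_inr_s9 P n p' q' hs⟩
      · intro h1 h2
        rw [L.initials_inr] at h1
        rw [L.div_inr] at h2
        obtain ⟨hiq, hdq, hback⟩ := h.2 h1 h2
        refine ⟨by rwa [L.initials_inr], by rwa [L.div_inr], ?_⟩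
        intro U hU y hTy
        obtain ⟨q', rfl, hT⟩ := L.trans_inr_elim hTy
        obtain ⟨p', hTp, hs⟩ := hback U hU q' hT
        exact ⟨Sum.inr p', L.trans_inr_intro hTp, L.strat_inr_s9 P n p' q' hs⟩

/-- `Ω` is below everything. -/
lemma LTS.strat_omega_tree (L : LTS Lab) (P : Set Lab) :
    ∀ n (x : L.withTrees.Proc),
      L.withTrees.strat P n (Sum.inl (.node [] true)) x
  | 0, _ => trivial
  | n + 1, x => by
      constructor
      · intro U hU y hTy
        obtain ⟨s, -, hs⟩ := L.trans_inl_elim hTy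
        simp [STree.children] at hs
      · intro h1 h2
        exact absurd rfl h2

end Aux2
section Aux3

variable {Lab : Type}

lemma LTS.char_main (L : LTS Lab) (P : Set Lab) (hP : P.Finite) :
    ∀ n : ℕ,
      (∀ p q : L.Proc, L.strat P n p q →
        ∀ (P' : Set Lab) (m : ℕ),
          L.withTrees.strat P' m (Sum.inl (L.charTree P hP n p)) (Sum.inr q)) ∧
      (∀ p q : L.Proc,
        L.withTrees.strat P n (Sum.inl (L.charTree P hP n p)) (Sum.inr q) →
          L.strat P n p q) := by
  intro n
  induction n with
  | zero =>
      refine ⟨fun p q _ P' m => ?_, fun _ _ _ => trivial⟩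
      rw [L.charTree_zero P hP p]
      exact L.strat_omega_tree P' m _
  | succ n ih =>
      obtain ⟨ih1, ih2⟩ := ih
      constructor
      · -- part (i)
        intro p q hpq P' m
        cases m with
        | zero => trivial
        | succ m =>
            constructor
            · -- forward simulation
              intro U hU' y hTy
              obtain ⟨s, rfl, hs⟩ := L.trans_inl_elim hTy
              rw [L.mem_charTree_children] at hs
              obtain ⟨x, hx, hxU, rfl⟩ := hs
              obtain ⟨hTpick, -⟩ := L.pick_spec P n p hx
              rw [hxU] at hTpick
              have hUP : U ∈ P := hxU ▸ x.1.2
              obtain ⟨q', hTq, hstr⟩ := hpq.1 U hUP _ hTpick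
              exact ⟨Sum.inr q', L.trans_inr_intro hTq, ih1 _ q' hstr P' m⟩
            · -- convergence / back simulation
              intro h1 h2
              rw [L.div_inl, L.charTree_omega] at h2
              have hc : L.initials p ⊆ P ∧ ¬ L.Div p := by
                by_contra hcon
                rw [if_neg hcon] at h2
                exact h2 rfl
              obtain ⟨hiq, hdq, hback⟩ := hpq.2 hc.1 hc.2
              have hchild : ∀ U ∈ L.initials q,
                  U ∈ L.withTrees.initials (Sum.inl (L.charTree P hP (n + 1) p)) := by
                rintro U ⟨q₀, hq₀⟩
                have hUP : U ∈ P := hiq ⟨q₀, hq₀⟩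
                obtain ⟨p', hTp, -⟩ := hback U hUP q₀ hq₀
                have hx : (⟨U, hUP⟩, L.typ P n p') ∈ L.sucSet P n p := ⟨p', hTp, rfl⟩
                refine ⟨Sum.inl (L.charTree P hP n (L.pick P n p (⟨U, hUP⟩, L.typ P n p'))), ?_⟩
                exact L.trans_inl_intro ((L.mem_charTree_children P hP n p U _).mpr
                  ⟨_, hx, rfl, rfl⟩)
              refine ⟨?_, hdq, ?_⟩
              · rw [L.initials_inr]
                intro U hU
                exact h1 (hchild U hU)
              · intro U hU'' y hTy
                obtain ⟨q₀, rfl, hq₀⟩ := L.trans_inr_elim hTy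
                have hUP : U ∈ P := hiq ⟨q₀, hq₀⟩
                obtain ⟨p', hTp, hstr⟩ := hback U hUP q₀ hq₀
                have hx : (⟨U, hUP⟩, L.typ P n p') ∈ L.sucSet P n p := ⟨p', hTp, rfl⟩
                obtain ⟨hTpick, htyp⟩ := L.pick_spec P n p hx
                have hstr' : L.strat P n (L.pick P n p (⟨U, hUP⟩, L.typ P n p')) q₀ :=
                  (strat_congr_left L P n htyp q₀).mpr hstr
                refine ⟨Sum.inl (L.charTree P hP n (L.pick P n p (⟨U, hUP⟩, L.typ P n p'))),
                  ?_, ih1 _ q₀ hstr' P' m⟩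
                exact L.trans_inl_intro ((L.mem_charTree_children P hP n p U _).mpr
                  ⟨_, hx, rfl, rfl⟩)
      · -- part (ii)
        intro p q hst
        constructor
        · intro U hU p' hTp
          have hx : (⟨U, hU⟩, L.typ P n p') ∈ L.sucSet P n p := ⟨p', hTp, rfl⟩
          obtain ⟨hTpick, htyp⟩ := L.pick_spec P n p hx
          have hTt : L.withTrees.Trans (Sum.inl (L.charTree P hP (n + 1) p)) U
              (Sum.inl (L.charTree P hP n (L.pick P n p (⟨U, hU⟩, L.typ P n p')))) :=
            L.trans_inl_intro ((L.mem_charTree_children P hP n p U _).mpr ⟨_, hx, rfl, rfl⟩)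
          obtain ⟨y, hTy, hstr⟩ := hst.1 U hU _ hTt
          obtain ⟨q', rfl, hTq⟩ := L.trans_inr_elim hTy
          refine ⟨q', hTq, ?_⟩
          exact (strat_congr_left L P n htyp q').mp (ih2 _ q' hstr)
        · intro hip hdp
          have homega : (L.charTree P hP (n + 1) p).omega = false := by
            rw [L.charTree_omega, if_pos ⟨hip, hdp⟩]
          have h1 : L.withTrees.initials (Sum.inl (L.charTree P hP (n + 1) p)) ⊆ P := by
            rintro U ⟨y, hy⟩
            obtain ⟨s, -, hs⟩ := L.trans_inl_elim hy
            rw [L.mem_charTree_children] at hs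
            obtain ⟨x, -, hxU, -⟩ := hs
            exact hxU ▸ x.1.2
          have h2 : ¬ L.withTrees.Div (Sum.inl (L.charTree P hP (n + 1) p)) := by
            rw [L.div_inl, homega]
            simp
          obtain ⟨hiq, hdq, hback⟩ := hst.2 h1 h2
          refine ⟨?_, hdq, ?_⟩
          · rintro U ⟨q₀, hq₀⟩
            exact hiq (by rw [L.initials_inr]; exact ⟨q₀, hq₀⟩)
          · intro U hU q₀ hTq
            obtain ⟨y, hTy, hstr⟩ := hback U hU (Sum.inr q₀) (L.trans_inr_intro hTq)
            obtain ⟨s, rfl, hs⟩ := L.trans_inl_elim hTy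
            rw [L.mem_charTree_children] at hs
            obtain ⟨x, hx, hxU, rfl⟩ := hs
            obtain ⟨hTpick, -⟩ := L.pick_spec P n p hx
            rw [hxU] at hTpick
            exact ⟨_, hTpick, ih2 _ q₀ hstr⟩

end Aux3

theorem finOmega_finitary_slts (Act : Type) (L : LTS (Multiset Act)) (p q : L.Proc) :
    L.finOmega p q ↔
      ∀ t : STree (Multiset Act),
        L.withTrees.finOmega (Sum.inl t) (Sum.inr p) →
          L.withTrees.finOmega (Sum.inl t) (Sum.inr q) := by
  constructor
  · intro h t ht P hP n
    exact L.withTrees.strat_trans_s9 P n _ _ _ (ht P hP n) (L.strat_inr_s9 P n p q (h P hP n))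
  · intro h P hP n
    have hchar := L.char_main P hP n
    have hfin : L.withTrees.finOmega (Sum.inl (L.charTree P hP n p)) (Sum.inr p) :=
      fun P' _ m => hchar.1 p p (L.strat_refl_s9 P n p) P' m
    exact hchar.2 p q (h _ hfin P hP n)
end

section
/- For every sort-finite pomset labelled transition system with divergence and all processes p, q: p ≲^F q if and only if p ⊑_ω q, where p ≲^F q means that every finite synchronization tree t over Pom with t ≲ p also satisfies t ≲ q, and ⊑_ω is the intersection of the iterates F^n applied to the total relation. -/
/-- Reachability by finite sequences of transitions. -/
def LTS.reach {Lab : Type} (L : LTS Lab) : L.Proc → L.Proc → Prop :=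
  Relation.ReflTransGen (fun r s => ∃ U, L.Trans r U s)

/-- The sort of a process: all labels of transitions of processes reachable from it. -/
def LTS.sortOf {Lab : Type} (L : LTS Lab) (p : L.Proc) : Set Lab :=
  {U | ∃ r s, L.reach p r ∧ L.Trans r U s}

/- ===================== Auxiliary development ===================== -/

namespace STree
variable {Lab : Type}

theorem indOn {motive : STree Lab → Prop}
    (h : ∀ l b, (∀ c ∈ l, motive c.2) → motive (.node l b)) : ∀ t, motive t
  | .node l b => h l b (fun c _hc => indOn h c.2)
decreasing_by
  have := List.sizeOf_lt_of_mem _hc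
  cases c; simp at this ⊢; omega

/-- Depth of a synchronization tree. -/
def depth : STree Lab → ℕ
  | .node l _ => (l.attach.map (fun c => depth c.1.2)).foldr max 0 + 1
decreasing_by
  obtain ⟨⟨u,t⟩,hm⟩ := c
  have := List.sizeOf_lt_of_mem hm
  simp at this ⊢; omega

theorem le_foldr_max {α : Type*} (f : α → ℕ) :
    ∀ (l : List α), ∀ a ∈ l, f a ≤ (l.map f).foldr max 0 := by
  intro l
  induction l with
  | nil => intro a ha; simp at ha
  | cons x xs ih =>
      intro a ha
      rcases ha with _ | h
      · simp
      · simpa using Or.inr (ih a (by assumption))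

theorem depth_child_lt {l : List (Lab × STree Lab)} {b : Bool} {c : Lab × STree Lab}
    (hc : c ∈ l) : c.2.depth < (STree.node l b).depth := by
  rw [show (STree.node l b).depth
      = (l.attach.map (fun c => depth c.1.2)).foldr max 0 + 1 from by rw [depth]]
  have : c.2.depth ≤ (l.attach.map (fun c => depth c.1.2)).foldr max 0 :=
    le_foldr_max (fun c : {x // x ∈ l} => depth c.1.2) l.attach ⟨c, hc⟩ (List.mem_attach _ _)
  omega

end STree

namespace LTS
variable {Lab : Type}

/-- Satisfaction of a finite synchronization tree (viewed as a formula) by a process. -/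
def sat (L : LTS Lab) : STree Lab → L.Proc → Prop
  | .node l b, x =>
      (∀ c ∈ l.attach, ∃ x', L.Trans x c.1.1 x' ∧ L.sat c.1.2 x') ∧
      (b = false → ¬ L.Div x ∧
        ∀ U x', L.Trans x U x' → ∃ c ∈ l.attach, c.1.1 = U ∧ L.sat c.1.2 x')
decreasing_by
  all_goals
    obtain ⟨⟨u, t'⟩, hm⟩ := c
    have := List.sizeOf_lt_of_mem hm
    simp at this ⊢; omega

theorem sat_iff (L : LTS Lab) (t : STree Lab) (x : L.Proc) :
    L.sat t x ↔
      ((∀ c ∈ t.children, ∃ x', L.Trans x c.1 x' ∧ L.sat c.2 x') ∧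
       (t.omega = false → ¬ L.Div x ∧
         ∀ U x', L.Trans x U x' → ∃ t', (U, t') ∈ t.children ∧ L.sat t' x')) := by
  cases t with
  | node l b =>
      rw [sat]
      show _ ∧ _ ↔ _ ∧ _
      apply and_congr
      · constructor
        · intro h c hc
          exact h ⟨c, hc⟩ (List.mem_attach _ _)
        · rintro h ⟨c, hc⟩ _
          exact h c hc
      · apply imp_congr Iff.rfl
        apply and_congr Iff.rfl
        constructor
        · intro h U x' htr
          obtain ⟨⟨⟨u, t'⟩, hm⟩, _, rfl, hsat⟩ := h U x' htr
          exact ⟨t', hm, hsat⟩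
        · intro h U x' htr
          obtain ⟨t', hm, hsat⟩ := h U x' htr
          exact ⟨⟨(U, t'), hm⟩, List.mem_attach _ _, rfl, hsat⟩

theorem F_mono_s12 (L : LTS Lab) {R S : L.Proc → L.Proc → Prop}
    (h : ∀ a b, R a b → S a b) {p q : L.Proc} (hF : L.F R p q) : L.F S p q := by
  intro U
  obtain ⟨h1, h2⟩ := hF U
  refine ⟨fun p' hp => ?_, fun hd => ?_⟩
  · obtain ⟨q', hq, hr⟩ := h1 p' hp
    exact ⟨q', hq, h _ _ hr⟩
  · obtain ⟨hd2, h3⟩ := h2 hd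
    refine ⟨hd2, fun q' hq => ?_⟩
    obtain ⟨p', hp, hr⟩ := h3 q' hq
    exact ⟨p', hp, h _ _ hr⟩

theorem iter_anti (L : LTS Lab) : ∀ {m n : ℕ}, m ≤ n →
    ∀ p q : L.Proc, L.iter n p q → L.iter m p q := by
  have key : ∀ n (p q : L.Proc), L.iter (n+1) p q → L.iter n p q := by
    intro n
    induction n with
    | zero => intro p q _; trivial
    | succ k ih =>
        intro p q h
        exact L.F_mono_s12 ih h
  intro m n hmn
  induction hmn with
  | refl => exact fun p q h => h
  | step _ ih => exact fun p q h => ih p q (key _ p q h)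

/-- Transfer of tree satisfaction along `iter`. -/
theorem sat_of_sat_iter (L : LTS Lab) [Nonempty Lab] :
    ∀ t : STree Lab, ∀ p q : L.Proc, L.sat t p → L.iter t.depth p q → L.sat t q := by
  intro t
  induction t using STree.indOn with
  | _ l b ih =>
      intro p q hs hit
      rw [L.sat_iff] at hs ⊢
      obtain ⟨hs1, hs2⟩ := hs
      set D := (STree.node l b).depth - 1 with hD
      have hF : L.F (L.iter D) p q := by
        have h1 : (STree.node l b).depth = D + 1 := by
          rw [hD, STree.depth]; omega
        rw [h1] at hit; exact hit
      have hDle : ∀ c ∈ l, c.2.depth ≤ D := by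
        intro c hc
        have := STree.depth_child_lt (b := b) hc
        omega
      constructor
      · intro c hc
        obtain ⟨p', hp', hsp'⟩ := hs1 c hc
        obtain ⟨q', hq', hit'⟩ := (hF c.1).1 p' hp'
        exact ⟨q', hq', ih c hc p' q' hsp'
          (L.iter_anti (hDle c hc) _ _ hit')⟩
      · intro hb
        obtain ⟨hnd, hbox⟩ := hs2 hb
        refine ⟨((hF (Classical.arbitrary Lab)).2 hnd).1, ?_⟩
        intro U q' hq'
        obtain ⟨p', hp', hit'⟩ := ((hF U).2 hnd).2 q' hq'
        obtain ⟨t', ht'mem, hst'⟩ := hbox U p' hp'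
        exact ⟨t', ht'mem, ih (U, t') ht'mem p' q' hst'
          (L.iter_anti (hDle (U, t') ht'mem) _ _ hit')⟩

/-- `sat` implies `Pre` in the disjoint-union system. -/
theorem pre_of_sat (L : LTS Lab) (t : STree Lab) (x : L.Proc) (h : L.sat t x) :
    L.withTrees.Pre (Sum.inl t) (Sum.inr x) := by
  refine ⟨fun a b =>
      ∃ t' x', a = Sum.inl t' ∧ b = Sum.inr x' ∧ L.sat t' x', ?_, t, x, rfl, rfl, h⟩
  rintro a b ⟨t', x', rfl, rfl, hs⟩ U
  rw [L.sat_iff] at hs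
  obtain ⟨hs1, hs2⟩ := hs
  constructor
  · intro a' ha'
    cases a' with
    | inr y => exact absurd ha' (by simp [LTS.withTrees])
    | inl s =>
        have hmem : (U, s) ∈ t'.children := ha'
        obtain ⟨y, hy, hsy⟩ := hs1 (U, s) hmem
        exact ⟨Sum.inr y, hy, s, y, rfl, rfl, hsy⟩
  · intro hnd
    have hb : t'.omega = false := by
      simp only [LTS.withTrees] at hnd
      simpa using hnd
    obtain ⟨hndx, hbox⟩ := hs2 hb
    refine ⟨hndx, ?_⟩
    intro b' hb'
    cases b' with
    | inl s => exact absurd hb' (by simp [LTS.withTrees])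
    | inr y =>
        have hy : L.Trans x' U y := hb'
        obtain ⟨s, hsmem, hss⟩ := hbox U y hy
        exact ⟨Sum.inl s, hsmem, s, y, rfl, rfl, hss⟩

/-- `Pre` implies `sat` in the disjoint-union system. -/
theorem sat_of_pre (L : LTS Lab) [Nonempty Lab] :
    ∀ t : STree Lab, ∀ x : L.Proc,
      L.withTrees.Pre (Sum.inl t) (Sum.inr x) → L.sat t x := by
  intro t
  induction t using STree.indOn with
  | _ l b ih =>
      intro x ⟨R, hR, hRtx⟩
      have hF := hR _ _ hRtx
      rw [L.sat_iff]
      constructor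
      · intro c hc
        have htr : L.withTrees.Trans (Sum.inl (.node l b)) c.1 (Sum.inl c.2) := by
          show (c.1, c.2) ∈ STree.children (.node l b)
          simpa [STree.children] using hc
        obtain ⟨b', hb', hRb⟩ := (hF c.1).1 _ htr
        cases b' with
        | inl s => exact absurd hb' (by simp [LTS.withTrees])
        | inr y => exact ⟨y, hb', ih c hc y ⟨R, hR, hRb⟩⟩
      · intro hb
        have hb' : b = false := by simpa [STree.omega] using hb
        have hndt : ¬ L.withTrees.Div (Sum.inl (.node l b)) := by
          simp [LTS.withTrees, STree.omega, hb']
        refine ⟨((hF (Classical.arbitrary Lab)).2 hndt).1, ?_⟩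
        intro U x' hx'
        have htr : L.withTrees.Trans (Sum.inr x) U (Sum.inr x') := hx'
        obtain ⟨a', ha', hRa⟩ := ((hF U).2 hndt).2 _ htr
        cases a' with
        | inr y => exact absurd ha' (by simp [LTS.withTrees])
        | inl s =>
            have hmem : (U, s) ∈ l := ha'
            exact ⟨s, hmem, ih (U, s) hmem x' ⟨R, hR, hRa⟩⟩

/- ======= sort lemmas ======= -/

theorem mem_sortOf (L : LTS Lab) {p p' : L.Proc} {U : Lab} (h : L.Trans p U p') :
    U ∈ L.sortOf p :=
  ⟨p, p', Relation.ReflTransGen.refl, h⟩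

theorem sortOf_mono (L : LTS Lab) {p p' : L.Proc} {U : Lab} (h : L.Trans p U p') :
    L.sortOf p' ⊆ L.sortOf p := by
  rintro V ⟨r, s, hr, ht⟩
  exact ⟨r, s, Relation.ReflTransGen.head ⟨U, h⟩ hr, ht⟩

theorem initials_subset_sortOf (L : LTS Lab) (p : L.Proc) :
    L.initials p ⊆ L.sortOf p := by
  rintro U ⟨p', hp'⟩
  exact L.mem_sortOf hp'

theorem iter_of_strat_s12 (L : LTS Lab) (P : Set Lab) :
    ∀ n : ℕ, ∀ p q : L.Proc, L.sortOf p ⊆ P → L.sortOf q ⊆ P →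
      L.strat P n p q → L.iter n p q := by
  intro n
  induction n with
  | zero => intro p q _ _ _; trivial
  | succ k ih =>
      intro p q hp hq hs
      obtain ⟨h1, h2⟩ := hs
      intro U
      constructor
      · intro p' hp'
        have hU : U ∈ P := hp (L.mem_sortOf hp')
        obtain ⟨q', hq', hst⟩ := h1 U hU p' hp'
        exact ⟨q', hq', ih p' q'
          (fun V hV => hp (L.sortOf_mono hp' hV))
          (fun V hV => hq (L.sortOf_mono hq' hV)) hst⟩
      · intro hnd
        obtain ⟨_, hndq, h3⟩ :=
          h2 (fun V hV => hp (L.initials_subset_sortOf p hV)) hnd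
        refine ⟨hndq, ?_⟩
        intro q' hq'
        have hU : U ∈ P := hq (L.mem_sortOf hq')
        obtain ⟨p', hp', hst⟩ := h3 U hU q' hq'
        exact ⟨p', hp', ih p' q'
          (fun V hV => hp (L.sortOf_mono hp' hV))
          (fun V hV => hq (L.sortOf_mono hq' hV)) hst⟩

/- ======= characteristic trees ======= -/

open Classical in
/-- Characteristic trees `t(n, P, p)`, with the finiteness of their range. -/
noncomputable def charAux (L : LTS Lab) (P : Set Lab) (hP : P.Finite) :
    ∀ _ : ℕ, {f : L.Proc → STree Lab // (Set.range f).Finite}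
  | 0 => ⟨fun _ => .node [] true, Set.finite_range_const⟩
  | n + 1 =>
      let prev := L.charAux P hP n
      let base : Finset (Lab × STree Lab) := (hP.prod prev.2).toFinset
      let ch : L.Proc → Finset (Lab × STree Lab) := fun p =>
        base.filter (fun c => ∃ p', L.Trans p c.1 p' ∧ prev.1 p' = c.2)
      ⟨fun p => .node (ch p).toList (decide (¬ (¬ L.Div p ∧ L.initials p ⊆ P))),
       by
        apply Set.Finite.subset
          (((base.powerset.finite_toSet).prod (Set.finite_univ (α := Bool))).image
            (fun sb : Finset (Lab × STree Lab) × Bool => STree.node sb.1.toList sb.2))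
        rintro t ⟨p, rfl⟩
        exact ⟨(ch p, _), ⟨Finset.mem_coe.2 (Finset.mem_powerset.2 (Finset.filter_subset _ _)),
          Set.mem_univ _⟩, rfl⟩⟩

noncomputable def char (L : LTS Lab) (P : Set Lab) (hP : P.Finite) (n : ℕ)
    (p : L.Proc) : STree Lab :=
  (L.charAux P hP n).1 p

theorem char_zero (L : LTS Lab) (P : Set Lab) (hP : P.Finite) (p : L.Proc) :
    L.char P hP 0 p = .node [] true := rfl

open Classical in
theorem mem_char_children (L : LTS Lab) (P : Set Lab) (hP : P.Finite) (n : ℕ)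
    (p : L.Proc) (U : Lab) (s : STree Lab) :
    (U, s) ∈ (L.char P hP (n+1) p).children ↔
      U ∈ P ∧ ∃ p', L.Trans p U p' ∧ L.char P hP n p' = s := by
  show (U, s) ∈ (STree.node _ _).children ↔ _
  rw [STree.children, Finset.mem_toList, Finset.mem_filter, Set.Finite.mem_toFinset]
  constructor
  · rintro ⟨⟨hU, _⟩, p', htr, heq⟩
    exact ⟨hU, p', htr, heq⟩
  · rintro ⟨hU, p', htr, heq⟩
    exact ⟨⟨hU, heq ▸ Set.mem_range_self p'⟩, p', htr, heq⟩

open Classical in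
theorem char_omega (L : LTS Lab) (P : Set Lab) (hP : P.Finite) (n : ℕ) (p : L.Proc) :
    (L.char P hP (n+1) p).omega = false ↔ (¬ L.Div p ∧ L.initials p ⊆ P) := by
  show (STree.node _ (decide _)).omega = false ↔ _
  rw [STree.omega, decide_eq_false_iff_not, not_not]

/-- A process satisfies its own characteristic tree. -/
theorem sat_char_self (L : LTS Lab) (P : Set Lab) (hP : P.Finite) :
    ∀ n : ℕ, ∀ p : L.Proc, L.sat (L.char P hP n p) p := by
  intro n
  induction n with
  | zero =>
      intro p
      rw [L.sat_iff, char_zero]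
      exact ⟨by simp [STree.children], by simp [STree.omega]⟩
  | succ k ih =>
      intro p
      rw [L.sat_iff]
      constructor
      · rintro ⟨U, s⟩ hc
        obtain ⟨hU, p', htr, heq⟩ := (L.mem_char_children P hP k p U s).1 hc
        exact ⟨p', htr, heq ▸ ih p'⟩
      · intro hb
        obtain ⟨hnd, hin⟩ := (L.char_omega P hP k p).1 hb
        refine ⟨hnd, ?_⟩
        intro U x' htr
        exact ⟨L.char P hP k x', (L.mem_char_children P hP k p U _).2
          ⟨hin ⟨x', htr⟩, x', htr, rfl⟩, ih x'⟩

/-- Satisfying the characteristic tree of `p` implies the stratified preorder. -/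
theorem strat_of_sat_char (L : LTS Lab) (P : Set Lab) (hP : P.Finite) :
    ∀ n : ℕ, ∀ p x : L.Proc, L.sat (L.char P hP n p) x → L.strat P n p x := by
  intro n
  induction n with
  | zero => intro p x _; trivial
  | succ k ih =>
      intro p x hs
      rw [L.sat_iff] at hs
      obtain ⟨hs1, hs2⟩ := hs
      constructor
      · intro U hU p' hp'
        have hc : (U, L.char P hP k p') ∈ (L.char P hP (k+1) p).children :=
          (L.mem_char_children P hP k p U _).2 ⟨hU, p', hp', rfl⟩
        obtain ⟨x', hx', hsx'⟩ := hs1 _ hc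
        exact ⟨x', hx', ih p' x' hsx'⟩
      · intro hin hnd
        have hb : (L.char P hP (k+1) p).omega = false :=
          (L.char_omega P hP k p).2 ⟨hnd, hin⟩
        obtain ⟨hndx, hbox⟩ := hs2 hb
        refine ⟨?_, hndx, ?_⟩
        · rintro U ⟨x', hx'⟩
          obtain ⟨t', ht', _⟩ := hbox U x' hx'
          exact ((L.mem_char_children P hP k p U t').1 ht').1
        · intro U _hU x' hx'
          obtain ⟨t', ht', hst⟩ := hbox U x' hx'
          obtain ⟨hU, p', hp', heq⟩ := (L.mem_char_children P hP k p U t').1 ht'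
          exact ⟨p', hp', ih p' x' (heq ▸ hst)⟩

end LTS


theorem preF_iff_preOmega_of_sortFinite_plts (Pom : Type) (L : LTS Pom)
    (hsf : ∀ p : L.Proc, (L.sortOf p).Finite) (p q : L.Proc) :
    (∀ t : STree Pom,
        L.withTrees.Pre (Sum.inl t) (Sum.inr p) → L.withTrees.Pre (Sum.inl t) (Sum.inr q)) ↔
      L.preOmega p q := by
  by_cases hL : Nonempty Pom
  · haveI := hL
    constructor
    · intro H n
      have hP : (L.sortOf p ∪ L.sortOf q).Finite := (hsf p).union (hsf q)
      have h1 := L.sat_char_self _ hP n p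
      have h2 := L.sat_of_pre _ _ (H _ (L.pre_of_sat _ _ h1))
      exact L.iter_of_strat_s12 _ n p q Set.subset_union_left Set.subset_union_right
        (L.strat_of_sat_char _ hP n p q h2)
    · intro h t ht
      exact L.pre_of_sat t q
        (L.sat_of_sat_iter t p q (L.sat_of_pre t p ht) (h t.depth))
  · have hE : IsEmpty Pom := not_nonempty_iff.1 hL
    constructor
    · intro _ n
      cases n with
      | zero => trivial
      | succ k => intro U; exact hE.elim U
    · intro _ t _
      exact ⟨fun _ _ => True, fun a b _ U => hE.elim U, trivial⟩
end

section
/- For every sort-finite step labelled transition system with divergence and all processes p, q: p ≲^F q if and only if p ⊑_ω q, where p ≲^F q means that every finite synchronization tree t over Stp with t ≲ p also satisfies t ≲ q, and ⊑_ω is the intersection of the iterates F^n applied to the total relation. -/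
/-!
A tree explores a process only to a depth bounded by its size, so `t ≲ p` and
`p ⊑_(sizeOf t) q` already give `t ≲ q`.

Conversely, fix a finite set `P` of labels containing the sort of `p`. By induction on `n`, one
finite set of trees characterises every process `r` of sort inside `P` up to `⊑_n`, i.e. contains
a `t` with `t ≲ s ↔ r ⊑_n s` for all `s`: the tree for `r` has a summand `U : t'` for every
level-`n` tree `t'` characterising some `U`-successor of `r`, and `Ω` exactly when `r` diverges.
Finiteness of the level-`n` trees keeps these sums finite. Since `p ⊑_n p`, the tree of `p`
satisfies `t ≲ p`, hence `t ≲ q`, i.e. `p ⊑_n q`.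
-/

namespace LTS

variable {Lab : Type} (L : LTS Lab)

theorem monotone_F : Monotone L.F := fun _ _ hRS _ _ h U =>
  ⟨fun p' hp => (h U).1 p' hp |>.imp fun _ ⟨hq, hR⟩ => ⟨hq, hRS _ _ hR⟩,
   fun hd => ((h U).2 hd).imp_right fun hm q' hq =>
     (hm q' hq).imp fun _ ⟨hp, hR⟩ => ⟨hp, hRS _ _ hR⟩⟩

theorem pre_le_F_pre : L.Pre ≤ L.F L.Pre := fun _ _ ⟨R, hR, hab⟩ =>
  L.monotone_F (fun _ _ h => ⟨R, hR, h⟩) _ _ (hR _ _ hab)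

theorem F_pre_le_pre : L.F L.Pre ≤ L.Pre := fun _ _ h =>
  ⟨L.F L.Pre, fun _ _ h' => L.monotone_F L.pre_le_F_pre _ _ h', h⟩

theorem pre_iff_F {a b : L.Proc} : L.Pre a b ↔ L.F L.Pre a b :=
  ⟨fun h => L.pre_le_F_pre _ _ h, fun h => L.F_pre_le_pre _ _ h⟩

theorem iter_refl (n : ℕ) (p : L.Proc) : L.iter n p p := by
  induction n generalizing p with
  | zero => trivial
  | succ n ih =>
    exact fun U => ⟨fun p' h => ⟨p', h, ih p'⟩, fun hd => ⟨hd, fun q' h => ⟨q', h, ih q'⟩⟩⟩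

theorem mem_sortOf_of_trans {r r' : L.Proc} {U : Lab} (h : L.Trans r U r') : U ∈ L.sortOf r :=
  ⟨r, r', Relation.ReflTransGen.refl, h⟩

theorem sortOf_subset_of_trans {r r' : L.Proc} {U : Lab} (h : L.Trans r U r') :
    L.sortOf r' ⊆ L.sortOf r := fun _ ⟨s, s', hs, hs'⟩ =>
  ⟨s, s', Relation.ReflTransGen.head ⟨U, h⟩ hs, hs'⟩

theorem withTrees_pre_inl_inr_iff {t : STree Lab} {s : L.Proc} :
    L.withTrees.Pre (.inl t) (.inr s) ↔ ∀ U,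
      (∀ t', (U, t') ∈ t.children →
        ∃ s', L.Trans s U s' ∧ L.withTrees.Pre (.inl t') (.inr s')) ∧
      (t.omega = false → ¬ L.Div s ∧ ∀ s', L.Trans s U s' →
        ∃ t', (U, t') ∈ t.children ∧ L.withTrees.Pre (.inl t') (.inr s')) := by
  refine L.withTrees.pre_iff_F.trans ?_
  simp [F, withTrees, Sum.forall, Sum.exists]

theorem sizeOf_lt_of_mem_children {t t' : STree Lab} {U : Lab} (h : (U, t') ∈ t.children) :
    sizeOf t' < sizeOf t := by
  obtain ⟨l, b⟩ := t
  have := List.sizeOf_lt_of_mem (show (U, t') ∈ l from h)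
  simp only [STree.node.sizeOf_spec, Prod.mk.sizeOf_spec] at this ⊢
  omega

theorem withTrees_pre_of_iter {n : ℕ} {t : STree Lab} {r s : L.Proc} (ht : sizeOf t ≤ n)
    (htr : L.withTrees.Pre (.inl t) (.inr r)) (hrs : L.iter n r s) :
    L.withTrees.Pre (.inl t) (.inr s) := by
  induction n generalizing t r s with
  | zero => cases t; simp at ht
  | succ n ih =>
    have hchild {t'} {U} (h : (U, t') ∈ t.children) : sizeOf t' ≤ n := by
      have := sizeOf_lt_of_mem_children h; omega
    rw [withTrees_pre_inl_inr_iff] at htr ⊢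
    intro U
    obtain ⟨htr_sim, htr_div⟩ := htr U
    obtain ⟨hrs_sim, hrs_div⟩ := hrs U
    refine ⟨fun t' ht' => ?_, fun hnoΩ => ?_⟩
    · obtain ⟨r', hr', htr'⟩ := htr_sim t' ht'
      obtain ⟨s', hs', hrs'⟩ := hrs_sim r' hr'
      exact ⟨s', hs', ih (hchild ht') htr' hrs'⟩
    · obtain ⟨hr, htr_back⟩ := htr_div hnoΩ
      obtain ⟨hs, hrs_back⟩ := hrs_div hr
      refine ⟨hs, fun s' hs' => ?_⟩
      obtain ⟨r', hr', hrs'⟩ := hrs_back s' hs'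
      obtain ⟨t', ht', htr'⟩ := htr_back r' hr'
      exact ⟨t', ht', ih (hchild ht') htr' hrs'⟩

def IsCharacteristicTree (n : ℕ) (t : STree Lab) (r : L.Proc) : Prop :=
  ∀ s, L.withTrees.Pre (.inl t) (.inr s) ↔ L.iter n r s

theorem isCharacteristicTree_zero (r : L.Proc) : L.IsCharacteristicTree 0 (.node [] true) r := by
  intro s
  rw [withTrees_pre_inl_inr_iff]
  simp [STree.children, STree.omega, iter]

open Classical in
theorem isCharacteristicTree_succ {P : Finset Lab} {T : Finset (STree Lab)} {n : ℕ}
    (hT : ∀ r, L.sortOf r ⊆ P → ∃ t ∈ T, L.IsCharacteristicTree n t r)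
    {r : L.Proc} (hr : L.sortOf r ⊆ P) :
    L.IsCharacteristicTree (n + 1)
      (.node ((P ×ˢ T).filter fun x =>
          ∃ r', L.Trans r x.1 r' ∧ L.IsCharacteristicTree n x.2 r').toList
        (decide (L.Div r))) r := by
  have hsucc {U r'} (h : L.Trans r U r') : ∃ t' ∈ T, L.IsCharacteristicTree n t' r' :=
    hT r' ((L.sortOf_subset_of_trans h).trans hr)
  intro s
  rw [withTrees_pre_inl_inr_iff]
  simp only [STree.children, STree.omega, Finset.mem_toList,
    Finset.mem_filter, Finset.mem_product, decide_eq_false_iff_not]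
  refine forall_congr' fun U => and_congr ⟨fun h r' hr' => ?_, fun h t' ht' => ?_⟩
    (imp_congr_right fun _ => and_congr_right fun _ => forall₂_congr fun s' _ =>
      ⟨fun ⟨t', ⟨_, r', hr', ht'⟩, hs'⟩ => ⟨r', hr', (ht' s').1 hs'⟩,
       fun ⟨r', hr', hs'⟩ => ?_⟩)
  · obtain ⟨t', htT, ht'⟩ := hsucc hr'
    obtain ⟨s', hs', hts'⟩ := h t' ⟨⟨hr (L.mem_sortOf_of_trans hr'), htT⟩, r', hr', ht'⟩
    exact ⟨s', hs', (ht' s').1 hts'⟩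
  · obtain ⟨_, r', hr', ht'⟩ := ht'
    obtain ⟨s', hs', hrs'⟩ := h r' hr'
    exact ⟨s', hs', (ht' s').2 hrs'⟩
  · obtain ⟨t', htT, ht'⟩ := hsucc hr'
    exact ⟨t', ⟨⟨hr (L.mem_sortOf_of_trans hr'), htT⟩, r', hr', ht'⟩, (ht' s').2 hs'⟩

theorem exists_finset_isCharacteristicTree (P : Finset Lab) (n : ℕ) :
    ∃ T : Finset (STree Lab), ∀ r, L.sortOf r ⊆ P → ∃ t ∈ T, L.IsCharacteristicTree n t r := by
  classical
  induction n with
  | zero =>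
    exact ⟨{.node [] true}, fun r _ =>
      ⟨_, Finset.mem_singleton_self _, L.isCharacteristicTree_zero r⟩⟩
  | succ n ih =>
    obtain ⟨T, hT⟩ := ih
    refine ⟨((P ×ˢ T).powerset ×ˢ Finset.univ).image fun x => .node x.1.toList x.2,
      fun r hr => ⟨_, ?_, L.isCharacteristicTree_succ hT hr⟩⟩
    exact Finset.mem_image.2 ⟨(_, decide (L.Div r)),
      Finset.mem_product.2 ⟨Finset.mem_powerset.2 (Finset.filter_subset _ _), Finset.mem_univ _⟩,
      rfl⟩

end LTS

theorem preF_iff_preOmega_of_sortFinite_slts (Act : Type) (L : LTS (Multiset Act))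
    (hsf : ∀ p : L.Proc, (L.sortOf p).Finite) (p q : L.Proc) :
    (∀ t : STree (Multiset Act),
        L.withTrees.Pre (Sum.inl t) (Sum.inr p) → L.withTrees.Pre (Sum.inl t) (Sum.inr q)) ↔
      L.preOmega p q := by
  refine ⟨fun h n => ?_, fun h t hp => L.withTrees_pre_of_iter le_rfl hp (h _)⟩
  obtain ⟨T, hT⟩ := L.exists_finset_isCharacteristicTree (hsf p).toFinset n
  obtain ⟨t, -, ht⟩ := hT p (hsf p).coe_toFinset.superset
  exact (ht q).1 (h t ((ht p).2 (L.iter_refl n p)))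
end

section
/- For every pomset labelled transition system with divergence and all processes p, q: if p ⊑_ω q, then p ≲^F q, where p ≲^F q means that every finite synchronization tree t over Pom with t ≲ p also satisfies t ≲ q. -/
section Aux

variable {Lab : Type} (L : LTS Lab)

theorem LTS.F_mono_s15 {R S : L.Proc → L.Proc → Prop} (hRS : ∀ a b, R a b → S a b)
    {p q : L.Proc} (h : L.F R p q) : L.F S p q := by
  intro U
  obtain ⟨h1, h2⟩ := h U
  refine ⟨fun p' hp' => ?_, fun hd => ?_⟩
  · obtain ⟨q', hq', hr⟩ := h1 p' hp'
    exact ⟨q', hq', hRS _ _ hr⟩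
  · obtain ⟨hdq, h3⟩ := h2 hd
    exact ⟨hdq, fun q' hq' => by
      obtain ⟨p', hp', hr⟩ := h3 q' hq'
      exact ⟨p', hp', hRS _ _ hr⟩⟩

theorem LTS.iter_succ_le : ∀ n, ∀ p q, L.iter (n + 1) p q → L.iter n p q := by
  intro n
  induction n with
  | zero => intro p q _; trivial
  | succ n ih =>
    intro p q h
    exact L.F_mono_s15 ih h

theorem LTS.iter_le {m n : ℕ} (hmn : m ≤ n) : ∀ p q, L.iter n p q → L.iter m p q := by
  induction hmn with
  | refl => exact fun p q h => h
  | step _ ih => exact fun p q h => ih p q (L.iter_succ_le _ p q h)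

theorem LTS.F_comp {R S : L.Proc → L.Proc → Prop} {a b c : L.Proc}
    (hab : L.F R a b) (hbc : L.F S b c) :
    L.F (fun x z => ∃ y, R x y ∧ S y z) a c := by
  intro U
  obtain ⟨h1, h2⟩ := hab U
  obtain ⟨h3, h4⟩ := hbc U
  refine ⟨fun a' ha' => ?_, fun hda => ?_⟩
  · obtain ⟨b', hb', hr⟩ := h1 a' ha'
    obtain ⟨c', hc', hs⟩ := h3 b' hb'
    exact ⟨c', hc', b', hr, hs⟩
  · obtain ⟨hdb, h5⟩ := h2 hda
    obtain ⟨hdc, h6⟩ := h4 hdb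
    refine ⟨hdc, fun c' hc' => ?_⟩
    obtain ⟨b', hb', hs⟩ := h6 c' hc'
    obtain ⟨a', ha', hr⟩ := h5 b' hb'
    exact ⟨a', ha', b', hr, hs⟩

theorem LTS.iter_comp : ∀ n, ∀ a b c : L.Proc, L.iter n a b → L.iter n b c → L.iter n a c := by
  intro n
  induction n with
  | zero => intro a b c _ _; trivial
  | succ n ih =>
    intro a b c hab hbc
    exact L.F_mono_s15 (fun x z ⟨y, hxy, hyz⟩ => ih x y z hxy hyz) (L.F_comp hab hbc)

theorem LTS.pre_le_iter {p q : L.Proc} (h : L.Pre p q) : ∀ n, L.iter n p q := by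
  intro n
  induction n generalizing p q with
  | zero => trivial
  | succ n ih =>
    obtain ⟨R, hR, hpq⟩ := h
    exact L.F_mono_s15 (fun a b hab => ih ⟨R, hR, hab⟩) (hR p q hpq)

theorem LTS.iter_lift {p q : L.Proc} :
    ∀ n, L.iter n p q → L.withTrees.iter n (Sum.inr p) (Sum.inr q) := by
  intro n
  induction n generalizing p q with
  | zero => intro _; trivial
  | succ n ih =>
    intro h U
    obtain ⟨h1, h2⟩ := h U
    constructor
    · rintro (t | p') hp'
      · exact absurd hp' (by simp [LTS.withTrees])
      · obtain ⟨q', hq', hr⟩ := h1 p' hp'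
        exact ⟨Sum.inr q', hq', ih hr⟩
    · intro hd
      obtain ⟨hdq, h3⟩ := h2 hd
      refine ⟨hdq, ?_⟩
      rintro (t | q') hq'
      · exact absurd hq' (by simp [LTS.withTrees])
      · obtain ⟨p', hp', hr⟩ := h3 q' hq'
        exact ⟨Sum.inr p', hp', ih hr⟩

theorem STree.sizeOf_child_lt {t t' : STree Lab} {U : Lab} (h : (U, t') ∈ t.children) :
    sizeOf t' < sizeOf t := by
  obtain ⟨l, b⟩ := t
  have := List.sizeOf_lt_of_mem h
  simp only [STree.children] at h
  have h2 : sizeOf t' < sizeOf (U, t') := by simp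
  calc sizeOf t' < sizeOf (U, t') := h2
    _ < sizeOf l := List.sizeOf_lt_of_mem h
    _ < sizeOf (STree.node l b) := by simp

theorem LTS.tree_pre {t : STree Lab} {q : L.Proc}
    (h : ∀ n, L.withTrees.iter n (Sum.inl t) (Sum.inr q)) :
    L.withTrees.Pre (Sum.inl t) (Sum.inr q) := by
  refine ⟨fun x y => ∃ t p, x = Sum.inl t ∧ y = Sum.inr p ∧ L.withTrees.iter (sizeOf t) x y,
    ?_, t, q, rfl, rfl, h _⟩
  rintro _ _ ⟨t, p, rfl, rfl, hit⟩
  obtain ⟨m, hm⟩ : ∃ m, sizeOf t = m + 1 := by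
    obtain ⟨l, b⟩ := t
    exact ⟨sizeOf l + sizeOf b, by simp; omega⟩
  rw [hm] at hit
  intro U
  obtain ⟨h1, h2⟩ := hit U
  constructor
  · rintro (t' | p') hp'
    · obtain ⟨y', hy', hr⟩ := h1 _ hp'
      obtain (t'' | q') := y'
      · exact absurd hy' (by simp [LTS.withTrees])
      · have hlt : sizeOf t' < m + 1 := hm ▸ STree.sizeOf_child_lt hp'
        exact ⟨Sum.inr q', hy',
          t', q', rfl, rfl, L.withTrees.iter_le (by omega) _ _ hr⟩
    · exact absurd hp' (by simp [LTS.withTrees])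
  · intro hd
    obtain ⟨hdq, h3⟩ := h2 hd
    refine ⟨hdq, ?_⟩
    rintro (t'' | q') hq'
    · exact absurd hq' (by simp [LTS.withTrees])
    · obtain ⟨x', hx', hr⟩ := h3 _ hq'
      obtain (t' | p') := x'
      · have hlt : sizeOf t' < m + 1 := hm ▸ STree.sizeOf_child_lt hx'
        exact ⟨Sum.inl t', hx',
          t', q', rfl, rfl, L.withTrees.iter_le (by omega) _ _ hr⟩
      · exact absurd hx' (by simp [LTS.withTrees])

end Aux

theorem preOmega_le_preF_plts (Pom : Type) (L : LTS Pom) (p q : L.Proc) (h : L.preOmega p q) :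
    ∀ t : STree Pom,
      L.withTrees.Pre (Sum.inl t) (Sum.inr p) → L.withTrees.Pre (Sum.inl t) (Sum.inr q) := by
  intro t ht
  apply L.tree_pre
  intro n
  exact L.withTrees.iter_comp n _ _ _ (L.withTrees.pre_le_iter ht n) (L.iter_lift n (h n))
end

section
/- For every finitely branching pomset labelled transition system with divergence (i.e., one in which for every process p the set {(U, q) | p →^U q} is finite) and all processes p, q: p ⊑_ω q implies p ≲ q; consequently in finitely branching systems ≲, ⊑_ω, and ≲^F all coincide. -/
namespace LTSAux

variable {Lab : Type}

lemma F_mono (L : LTS Lab) {R S : L.Proc → L.Proc → Prop} (h : ∀ a b, R a b → S a b)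
    {p q : L.Proc} (hpq : L.F R p q) : L.F S p q := by
  intro U
  obtain ⟨hf, hb⟩ := hpq U
  constructor
  · intro p' hp'
    obtain ⟨q', hq', hr⟩ := hf p' hp'
    exact ⟨q', hq', h _ _ hr⟩
  · intro hd
    obtain ⟨hdq, hb'⟩ := hb hd
    refine ⟨hdq, fun q' hq' => ?_⟩
    obtain ⟨p', hp', hr⟩ := hb' q' hq'
    exact ⟨p', hp', h _ _ hr⟩

lemma iter_succ_le (L : LTS Lab) : ∀ n (p q : L.Proc), L.iter (n + 1) p q → L.iter n p q := by
  intro n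
  induction n with
  | zero => intro p q _; trivial
  | succ n ih =>
    intro p q hpq
    exact F_mono L (fun a b => ih a b) hpq

lemma iter_of_prebisim (L : LTS Lab) {R : L.Proc → L.Proc → Prop}
    (hR : L.IsPrebisimulation R) : ∀ n (p q : L.Proc), R p q → L.iter n p q := by
  intro n
  induction n with
  | zero => intro p q _; trivial
  | succ n ih =>
    intro p q hpq
    exact F_mono L (fun a b => ih a b) (hR p q hpq)

lemma pigeon {α : Type*} {S : Set α} (hS : S.Finite) (P : ℕ → α → Prop)
    (hmono : ∀ n a, P (n + 1) a → P n a)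
    (h : ∀ n, ∃ a ∈ S, P n a) : ∃ a ∈ S, ∀ n, P n a := by
  classical
  have hle : ∀ {m n : ℕ} (a : α), n ≤ m → P m a → P n a := by
    intro m n a hnm hm
    obtain ⟨k, rfl⟩ := Nat.exists_eq_add_of_le hnm
    induction k with
    | zero => exact hm
    | succ k ih => exact ih (Nat.le_add_right _ _) (hmono _ _ hm)
  by_contra hcon
  push_neg at hcon
  set f : α → ℕ := fun a => if ha : ∃ n, ¬ P n a then ha.choose else 0 with hf
  set N := hS.toFinset.sup f with hN
  obtain ⟨a, haS, hPa⟩ := h N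
  have h1 : ∃ n, ¬ P n a := hcon a haS
  have h2 : ¬ P (f a) a := by
    simp only [hf, dif_pos h1]
    exact h1.choose_spec
  exact h2 (hle a (Finset.le_sup (hS.mem_toFinset.2 haS)) hPa)

lemma preOmega_prebisim (L : LTS Lab)
    (hfb : ∀ p : L.Proc, {x : Lab × L.Proc | L.Trans p x.1 x.2}.Finite) :
    L.IsPrebisimulation L.preOmega := by
  intro p q hpq U
  constructor
  · intro p' hp'
    have h : ∀ n, ∃ x ∈ {x : Lab × L.Proc | L.Trans q x.1 x.2},
        x.1 = U ∧ L.iter n p' x.2 := by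
      intro n
      obtain ⟨q', hq', hiter⟩ := (hpq (n + 1) U).1 p' hp'
      exact ⟨(U, q'), hq', rfl, hiter⟩
    obtain ⟨x, hxS, hx⟩ := pigeon (hfb q) _
      (fun n a ha => ⟨ha.1, iter_succ_le L n _ _ ha.2⟩) h
    have hU : x.1 = U := (hx 0).1
    refine ⟨x.2, ?_, fun n => (hx n).2⟩
    rw [← hU]; exact hxS
  · intro hdp
    have hd' := (hpq 1 U).2 hdp
    refine ⟨hd'.1, ?_⟩
    intro q' hq'
    have h : ∀ n, ∃ x ∈ {x : Lab × L.Proc | L.Trans p x.1 x.2},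
        x.1 = U ∧ L.iter n x.2 q' := by
      intro n
      obtain ⟨p', hp', hiter⟩ := ((hpq (n + 1) U).2 hdp).2 q' hq'
      exact ⟨(U, p'), hp', rfl, hiter⟩
    obtain ⟨x, hxS, hx⟩ := pigeon (hfb p) _
      (fun n a ha => ⟨ha.1, iter_succ_le L n _ _ ha.2⟩) h
    have hU : x.1 = U := (hx 0).1
    refine ⟨x.2, ?_, fun n => (hx n).2⟩
    rw [← hU]; exact hxS

lemma pre_trans (L : LTS Lab) {a b c : L.Proc} (h1 : L.Pre a b) (h2 : L.Pre b c) :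
    L.Pre a c := by
  obtain ⟨R, hR, hab⟩ := h1
  obtain ⟨S, hS, hbc⟩ := h2
  refine ⟨fun x z => ∃ y, R x y ∧ S y z, ?_, b, hab, hbc⟩
  rintro x z ⟨y, hxy, hyz⟩ U
  obtain ⟨hf1, hb1⟩ := hR x y hxy U
  obtain ⟨hf2, hb2⟩ := hS y z hyz U
  constructor
  · intro x' hx'
    obtain ⟨y', hy', hR'⟩ := hf1 x' hx'
    obtain ⟨z', hz', hS'⟩ := hf2 y' hy'
    exact ⟨z', hz', y', hR', hS'⟩
  · intro hdx
    obtain ⟨hdy, hb1'⟩ := hb1 hdx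
    obtain ⟨hdz, hb2'⟩ := hb2 hdy
    refine ⟨hdz, fun z' hz' => ?_⟩
    obtain ⟨y', hy', hS'⟩ := hb2' z' hz'
    obtain ⟨x', hx', hR'⟩ := hb1' y' hy'
    exact ⟨x', hx', y', hR', hS'⟩

lemma pre_lift (L : LTS Lab) {p q : L.Proc} (h : L.Pre p q) :
    L.withTrees.Pre (Sum.inr p) (Sum.inr q) := by
  obtain ⟨R, hR, hpq⟩ := h
  refine ⟨fun x y => ∃ a b, x = Sum.inr a ∧ y = Sum.inr b ∧ R a b, ?_,
    p, q, rfl, rfl, hpq⟩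
  rintro _ _ ⟨a, b, rfl, rfl, hab⟩ U
  obtain ⟨hf, hb⟩ := hR a b hab U
  constructor
  · rintro (t' | a') htr
    · exact htr.elim
    · obtain ⟨b', hb', hR'⟩ := hf a' htr
      exact ⟨Sum.inr b', hb', a', b', rfl, rfl, hR'⟩
  · intro hd
    obtain ⟨hdb, hb'⟩ := hb hd
    refine ⟨hdb, ?_⟩
    rintro (t' | b') htr
    · exact htr.elim
    · obtain ⟨a', ha', hR'⟩ := hb' b' htr
      exact ⟨Sum.inr a', ha', a', b', rfl, rfl, hR'⟩

open Classical in
/-- The characteristic tree of depth `n` of a process. -/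
noncomputable def charTree (L : LTS Lab)
    (hfb : ∀ p : L.Proc, {x : Lab × L.Proc | L.Trans p x.1 x.2}.Finite) :
    ℕ → L.Proc → STree Lab
  | 0, _ => .node [] true
  | n + 1, p => .node (((hfb p).toFinset.toList).map
      (fun x => (x.1, charTree L hfb n x.2))) (if L.Div p then true else false)

lemma charTree_children (L : LTS Lab)
    (hfb : ∀ p : L.Proc, {x : Lab × L.Proc | L.Trans p x.1 x.2}.Finite)
    (n : ℕ) (p : L.Proc) (U : Lab) (t' : STree Lab) :
    (U, t') ∈ (charTree L hfb (n + 1) p).children ↔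
      ∃ p', L.Trans p U p' ∧ t' = charTree L hfb n p' := by
  simp only [charTree, STree.children, List.mem_map, Finset.mem_toList,
    Set.Finite.mem_toFinset, Set.mem_setOf_eq, Prod.mk.injEq]
  constructor
  · rintro ⟨⟨V, p'⟩, htr, rfl, rfl⟩
    exact ⟨p', htr, rfl⟩
  · rintro ⟨p', htr, rfl⟩
    exact ⟨(U, p'), htr, rfl, rfl⟩

lemma charTree_omega (L : LTS Lab)
    (hfb : ∀ p : L.Proc, {x : Lab × L.Proc | L.Trans p x.1 x.2}.Finite)
    (n : ℕ) (p : L.Proc) :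
    ((charTree L hfb (n + 1) p).omega = true) ↔ L.Div p := by
  simp only [charTree, STree.omega]
  split <;> simp_all

lemma charTree_pre (L : LTS Lab)
    (hfb : ∀ p : L.Proc, {x : Lab × L.Proc | L.Trans p x.1 x.2}.Finite)
    (n : ℕ) (p : L.Proc) :
    L.withTrees.Pre (Sum.inl (charTree L hfb n p)) (Sum.inr p) := by
  refine ⟨fun x y => ∃ m r, x = Sum.inl (charTree L hfb m r) ∧ y = Sum.inr r, ?_,
    n, p, rfl, rfl⟩
  rintro _ _ ⟨m, r, rfl, rfl⟩ U
  constructor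
  · rintro (t' | a') htr
    · match m with
      | 0 => exact absurd htr (by simp [LTS.withTrees, charTree, STree.children])
      | m + 1 =>
        obtain ⟨r', hr', rfl⟩ := (charTree_children L hfb m r U t').1 htr
        exact ⟨Sum.inr r', hr', m, r', rfl, rfl⟩
    · exact htr.elim
  · intro hd
    match m with
    | 0 => exact absurd rfl hd
    | m + 1 =>
      have hdr : ¬ L.Div r := fun h => hd ((charTree_omega L hfb m r).2 h)
      refine ⟨hdr, ?_⟩
      rintro (t' | r') htr
      · exact htr.elim
      · exact ⟨Sum.inl (charTree L hfb m r'),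
          (charTree_children L hfb m r U _).2 ⟨r', htr, rfl⟩, m, r', rfl, rfl⟩

lemma charTree_iter (L : LTS Lab)
    (hfb : ∀ p : L.Proc, {x : Lab × L.Proc | L.Trans p x.1 x.2}.Finite) :
    ∀ n (p q : L.Proc),
      L.withTrees.Pre (Sum.inl (charTree L hfb n p)) (Sum.inr q) → L.iter n p q := by
  intro n
  induction n with
  | zero => intro p q _; trivial
  | succ n ih =>
    rintro p q ⟨R, hR, hpq⟩ U
    obtain ⟨hf, hb⟩ := hR _ _ hpq U
    constructor
    · intro p' hp'
      have hch : L.withTrees.Trans (Sum.inl (charTree L hfb (n + 1) p)) U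
          (Sum.inl (charTree L hfb n p')) :=
        (charTree_children L hfb n p U _).2 ⟨p', hp', rfl⟩
      obtain ⟨x', hx', hR'⟩ := hf _ hch
      match x' with
      | Sum.inl _ => exact hx'.elim
      | Sum.inr q' => exact ⟨q', hx', ih p' q' ⟨R, hR, hR'⟩⟩
    · intro hdp
      have hdt : ¬ L.withTrees.Div (Sum.inl (charTree L hfb (n + 1) p)) := by
        intro h
        exact hdp ((charTree_omega L hfb n p).1 h)
      obtain ⟨hdq, hb'⟩ := hb hdt
      refine ⟨hdq, ?_⟩
      intro q' hq'
      obtain ⟨x, hx, hR'⟩ := hb' (Sum.inr q') hq'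
      match x with
      | Sum.inr _ => exact hx.elim
      | Sum.inl t' =>
        obtain ⟨p', hp', rfl⟩ := (charTree_children L hfb n p U t').1 hx
        exact ⟨p', hp', ih p' q' ⟨R, hR, hR'⟩⟩

end LTSAux

theorem finitely_branching_collapse_plts (Pom : Type) (L : LTS Pom)
    (hfb : ∀ p : L.Proc, {x : Pom × L.Proc | L.Trans p x.1 x.2}.Finite) (p q : L.Proc) :
    (L.preOmega p q → L.Pre p q) ∧
    (L.Pre p q ↔ L.preOmega p q) ∧
    (L.Pre p q ↔
      ∀ t : STree Pom,
        L.withTrees.Pre (Sum.inl t) (Sum.inr p) → L.withTrees.Pre (Sum.inl t) (Sum.inr q)) := by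
  have homega_pre : L.preOmega p q → L.Pre p q := fun h =>
    ⟨L.preOmega, LTSAux.preOmega_prebisim L hfb, h⟩
  have hpre_omega : L.Pre p q → L.preOmega p q := by
    rintro ⟨R, hR, hpq⟩ n
    exact LTSAux.iter_of_prebisim L hR n p q hpq
  refine ⟨homega_pre, ⟨hpre_omega, homega_pre⟩, ?_, ?_⟩
  · intro hpre t ht
    exact LTSAux.pre_trans _ ht (LTSAux.pre_lift L hpre)
  · intro H
    refine homega_pre (fun n => ?_)
    exact LTSAux.charTree_iter L hfb n p q
      (H (LTSAux.charTree L hfb n p) (LTSAux.charTree_pre L hfb n p))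
end
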